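/- arXiv:1006.2712 — 4 statements merged into one kernel-verified Lean document; each statement's English description precedes it below -/
import Mathlib

section
/- For every β > 0 and t ≥ 0, the absolute survival probability averaged over an exponentially distributed initial surplus satisfies ∫_0^∞ β e^{−βx} P(τ_0 > t | X_0 = x) dx = exp( − ∫_0^t φ(β e^{−rs}) ds ). -/
/-!
Pathwise, ruin occurs by time `t` exactly when `A_t = ∫_0^t e^{-rs} dZ_s` exceeds the initial
surplus `x`; the borderline event `A_t = x` is null for almost every `x`. Hence the left-hand side
is `∫_0^∞ β e^{-βx} P(A_t ≤ x) dx`, which Tonelli turns into `E[e^{-β A_t}]`. Approximating `A_t`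
by Riemann–Stieltjes sums on uniform grids, independence and stationarity of the increments give
`E[exp(-Σ c_i ΔZ_i)] = exp(-Σ φ(c_i) Δt_i)`, and both sides converge by dominated convergence, the
right one because `φ` is continuous on `(0, ∞)`.
-/

open MeasureTheory ProbabilityTheory Filter
open scoped ENNReal

open Classical in
/-- The Lebesgue–Stieltjes measure associated to a path `g : ℝ → ℝ`, when `g` is
nondecreasing and right-continuous (and the zero measure otherwise). -/
noncomputable def stMeasure (g : ℝ → ℝ) : Measure ℝ :=
  if h : Monotone g ∧ ∀ x, ContinuousWithinAt g (Set.Ici x) x then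
    StieltjesFunction.measure ⟨g, h.1, h.2⟩
  else 0

/-- The pathwise Lebesgue–Stieltjes integral `∫_0^t f(s) dg(s)`. -/
noncomputable def lsInt (g : ℝ → ℝ) (f : ℝ → ℝ) (t : ℝ) : ℝ :=
  ∫ s in Set.Ioc 0 t, f s ∂(stMeasure g)

/-- The OU-type risk process at time `t`, started at `x`, driven by the path `g`:
`X_t = e^{rt} (x - ∫_0^t e^{-rs} dg(s))`. -/
noncomputable def OU (r x : ℝ) (g : ℝ → ℝ) (t : ℝ) : ℝ :=
  Real.exp (r * t) * (x - lsInt g (fun s => Real.exp (-(r * s))) t)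

/-- The absolute ruin time `τ₀ = inf {s > 0 : X_s < 0}`, valued in `ℝ≥0∞`
(with `τ₀ = ∞` if ruin never occurs). -/
noncomputable def ruinTime (r x : ℝ) (g : ℝ → ℝ) : ℝ≥0∞ :=
  ⨅ s ∈ {s : ℝ | 0 < s ∧ OU r x g s < 0}, ENNReal.ofReal s

open Set Topology

def IsStieltjesPath (g : ℝ → ℝ) : Prop :=
  Monotone g ∧ ∀ x, ContinuousWithinAt g (Ici x) x

section StieltjesPath

variable {g f : ℝ → ℝ} {t : ℝ}

theorem isStieltjesPath_id : IsStieltjesPath id :=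
  ⟨monotone_id, fun _ => continuousWithinAt_id⟩

theorem stMeasure_eq (hg : IsStieltjesPath g) :
    stMeasure g = StieltjesFunction.measure ⟨g, hg.1, hg.2⟩ :=
  dif_pos hg

theorem stMeasure_Ioc (hg : IsStieltjesPath g) (a b : ℝ) :
    stMeasure g (Ioc a b) = ENNReal.ofReal (g b - g a) := by
  rw [stMeasure_eq hg]
  exact StieltjesFunction.measure_Ioc _ a b

theorem stMeasure_id : stMeasure id = volume := by
  rw [stMeasure_eq isStieltjesPath_id, Real.volume_eq_stieltjes_id]
  rfl

instance isLocallyFiniteMeasure_stMeasure (g : ℝ → ℝ) :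
    IsLocallyFiniteMeasure (stMeasure g) := by
  unfold stMeasure
  split_ifs <;> infer_instance

theorem lsInt_of_nonpos (ht : t ≤ 0) : lsInt g f t = 0 := by
  rw [lsInt, Ioc_eq_empty (not_lt.2 ht), Measure.restrict_empty, integral_zero_measure]

theorem lsInt_nonneg (hf : ∀ s, 0 ≤ f s) : 0 ≤ lsInt g f t :=
  setIntegral_nonneg measurableSet_Ioc fun s _ => hf s

theorem lsInt_mono (hf : Continuous f) (hf0 : ∀ s, 0 ≤ f s) : Monotone (lsInt g f) :=
  fun _ _ hsu => setIntegral_mono_set hf.integrableOn_Ioc (Eventually.of_forall hf0)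
    (Ioc_subset_Ioc_right hsu).eventuallyLE

theorem continuousWithinAt_lsInt (hg : IsStieltjesPath g) (hf : Continuous f) (ht : 0 ≤ t) :
    ContinuousWithinAt (lsInt g f) (Ici t) t := by
  obtain ⟨C, hC⟩ :=
    isCompact_Icc.exists_bound_of_continuousOn (hf.continuousOn (s := Icc t (t + 1)))
  have hjump : Tendsto (fun u => C * (g u - g t)) (𝓝[≥] t) (𝓝 0) := by
    simpa using ((hg.2 t).sub_const (g t)).const_mul C
  rw [ContinuousWithinAt, tendsto_iff_norm_sub_tendsto_zero]
  refine squeeze_zero' (Eventually.of_forall fun _ => norm_nonneg _) ?_ hjump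
  filter_upwards [self_mem_nhdsWithin, Ico_mem_nhdsGE (lt_add_one t)] with u (htu : t ≤ u) hu
  have hsplit : lsInt g f u = lsInt g f t + ∫ s in Ioc t u, f s ∂stMeasure g := by
    rw [lsInt, lsInt, ← Ioc_union_Ioc_eq_Ioc ht htu, setIntegral_union
      (Ioc_disjoint_Ioc_of_le le_rfl) measurableSet_Ioc hf.integrableOn_Ioc hf.integrableOn_Ioc]
  rw [hsplit, add_sub_cancel_left]
  calc ‖∫ s in Ioc t u, f s ∂stMeasure g‖ ≤ C * (stMeasure g).real (Ioc t u) :=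
        norm_setIntegral_le_of_norm_le_const measure_Ioc_lt_top
          fun s hs => hC s ⟨hs.1.le, hs.2.trans hu.2.le⟩
    _ = C * (g u - g t) := by
        rw [measureReal_def, stMeasure_Ioc hg, ENNReal.toReal_ofReal (sub_nonneg.2 (hg.1 htu))]

end StieltjesPath

section RiemannStieltjes

noncomputable def riemannStieltjesSum (f g : ℝ → ℝ) (t : ℝ) (n : ℕ) : ℝ :=
  ∑ i ∈ Finset.range n, f (i * (t / n)) * (g ((i + 1) * (t / n)) - g (i * (t / n)))

noncomputable def leftStep (f : ℝ → ℝ) (t : ℝ) (n : ℕ) (s : ℝ) : ℝ :=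
  ∑ i ∈ Finset.range n,
    (Ioc (i * (t / n)) ((i + 1) * (t / n))).indicator (fun _ => f (i * (t / n))) s

noncomputable def gridIndex (t : ℝ) (n : ℕ) (s : ℝ) : ℕ :=
  ⌈s / (t / n)⌉₊ - 1

variable {g f : ℝ → ℝ} {s t : ℝ} {n : ℕ}

theorem gridIndex_spec (hs : s ∈ Ioc 0 t) (hn : 0 < n) :
    gridIndex t n s < n ∧
      s ∈ Ioc (gridIndex t n s * (t / n)) ((gridIndex t n s + 1) * (t / n)) := by
  have hδ : 0 < t / n := div_pos (hs.1.trans_le hs.2) (Nat.cast_pos.2 hn)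
  have hu : 0 < s / (t / n) := div_pos hs.1 hδ
  have hceil : 1 ≤ ⌈s / (t / n)⌉₊ := Nat.one_le_iff_ne_zero.2 (Nat.ceil_pos.2 hu).ne'
  have hcast : (gridIndex t n s : ℝ) + 1 = ⌈s / (t / n)⌉₊ := by
    rw [gridIndex, Nat.cast_sub hceil, Nat.cast_one, sub_add_cancel]
  refine ⟨?_, ?_, ?_⟩
  · have : ⌈s / (t / n)⌉₊ ≤ n := Nat.ceil_le.2 <| by
      rw [div_le_iff₀ hδ, mul_div_cancel₀ _ (Nat.cast_pos.2 hn).ne']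
      exact hs.2
    unfold gridIndex
    omega
  · rw [← lt_div_iff₀ hδ]
    linarith [Nat.ceil_lt_add_one hu.le]
  · rw [hcast, ← div_le_iff₀ hδ]
    exact Nat.le_ceil _

theorem leftStep_eq {k : ℕ} (hk : k < n) (hs : s ∈ Ioc (k * (t / n)) ((k + 1) * (t / n))) :
    leftStep f t n s = f (k * (t / n)) := by
  have hδ : 0 < t / n := by nlinarith [hs.1.trans_le hs.2]
  rw [leftStep, Finset.sum_eq_single_of_mem k (Finset.mem_range.2 hk), indicator_of_mem hs]
  intro j _ hjk
  refine indicator_of_notMem (fun hj => ?_) _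
  rcases Nat.lt_or_gt_of_ne hjk with h | h
  · have : (j : ℝ) + 1 ≤ k := by exact_mod_cast h
    nlinarith [hj.2, hs.1]
  · have : (k : ℝ) + 1 ≤ j := by exact_mod_cast h
    nlinarith [hj.1, hs.2]

theorem measurable_leftStep : Measurable (leftStep f t n) :=
  Finset.measurable_sum _ fun _ _ => measurable_const.indicator measurableSet_Ioc

theorem abs_leftStep_le {C : ℝ} (hC : ∀ p ∈ Icc 0 t, |f p| ≤ C) (hs : s ∈ Ioc 0 t) :
    |leftStep f t n s| ≤ C := by
  rcases n.eq_zero_or_pos with rfl | hn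
  · simpa [leftStep] using (abs_nonneg _).trans (hC 0 ⟨le_rfl, hs.1.le.trans hs.2⟩)
  have ht : 0 < t := hs.1.trans_le hs.2
  obtain ⟨hk, hks⟩ := gridIndex_spec hs hn
  rw [leftStep_eq hk hks]
  exact hC _ ⟨by positivity, hks.1.le.trans hs.2⟩

theorem tendsto_leftStep (hf : ContinuousAt f s) (hs : s ∈ Ioc 0 t) :
    Tendsto (fun n => leftStep f t n s) atTop (𝓝 (f s)) := by
  have hgrid : Tendsto (fun n : ℕ => (gridIndex t n s : ℝ) * (t / n)) atTop (𝓝 s) := by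
    have hlow : Tendsto (fun n : ℕ => s - t / n) atTop (𝓝 s) := by
      simpa using tendsto_const_nhds.sub (tendsto_const_div_atTop_nhds_zero_nat t)
    refine tendsto_of_tendsto_of_tendsto_of_le_of_le' hlow tendsto_const_nhds ?_ ?_
    · filter_upwards [eventually_gt_atTop 0] with n hn
      linarith [(gridIndex_spec hs hn).2.2]
    · filter_upwards [eventually_gt_atTop 0] with n hn
      exact (gridIndex_spec hs hn).2.1.le
  refine (hf.tendsto.comp hgrid).congr' ?_
  filter_upwards [eventually_gt_atTop 0] with n hn
  obtain ⟨hk, hks⟩ := gridIndex_spec hs hn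
  exact (leftStep_eq hk hks).symm

theorem setIntegral_leftStep (hg : IsStieltjesPath g) (ht : 0 ≤ t) (n : ℕ) :
    ∫ s in Ioc 0 t, leftStep f t n s ∂stMeasure g = riemannStieltjesSum f g t n := by
  have hpiece : ∀ i ∈ Finset.range n,
      Ioc (i * (t / n)) ((i + 1) * (t / n)) ⊆ Ioc (0 : ℝ) t := fun i hi => by
    have hin : (i : ℝ) + 1 ≤ n := by exact_mod_cast Finset.mem_range.1 hi
    refine Ioc_subset_Ioc (by positivity) ?_
    calc ((i : ℝ) + 1) * (t / n) ≤ n * (t / n) := by gcongr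
      _ = t := mul_div_cancel₀ t (by linarith)
  rw [setIntegral_eq_integral_of_forall_compl_eq_zero fun s hs =>
    Finset.sum_eq_zero fun i hi => indicator_of_notMem (fun h => hs (hpiece i hi h)) _]
  simp only [leftStep]
  rw [integral_finsetSum _ fun i _ => (integrable_indicator_iff measurableSet_Ioc).2
    (integrableOn_const measure_Ioc_lt_top.ne)]
  refine Finset.sum_congr rfl fun i _ => ?_
  have hle : (i : ℝ) * (t / n) ≤ (i + 1) * (t / n) := by gcongr; linarith
  rw [integral_indicator_const _ measurableSet_Ioc, measureReal_def, stMeasure_Ioc hg,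
    ENNReal.toReal_ofReal (sub_nonneg.2 (hg.1 hle)), smul_eq_mul, mul_comm]

theorem riemannStieltjesSum_nonneg (hg : Monotone g) (hf : ∀ s, 0 ≤ f s) (ht : 0 ≤ t) (n : ℕ) :
    0 ≤ riemannStieltjesSum f g t n :=
  Finset.sum_nonneg fun i _ => mul_nonneg (hf _) <| sub_nonneg.2 <| hg <| by gcongr; linarith

theorem tendsto_riemannStieltjesSum (hg : IsStieltjesPath g) (hf : Continuous f) (ht : 0 ≤ t) :
    Tendsto (riemannStieltjesSum f g t) atTop (𝓝 (lsInt g f t)) := by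
  obtain ⟨C, hC⟩ := isCompact_Icc.exists_bound_of_continuousOn (hf.continuousOn (s := Icc 0 t))
  have : IsFiniteMeasure ((stMeasure g).restrict (Ioc 0 t)) :=
    isFiniteMeasure_restrict.2 measure_Ioc_lt_top.ne
  have hlim := tendsto_integral_of_dominated_convergence (μ := (stMeasure g).restrict (Ioc 0 t))
    (F := leftStep f t) (fun _ => C) (fun _ => measurable_leftStep.aestronglyMeasurable)
    (integrable_const C)
    (fun _ => (ae_restrict_iff' measurableSet_Ioc).2 <| Eventually.of_forall fun s hs =>
      abs_leftStep_le hC hs)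
    ((ae_restrict_iff' measurableSet_Ioc).2 <| Eventually.of_forall fun s hs =>
      tendsto_leftStep hf.continuousAt hs)
  unfold lsInt
  simpa only [setIntegral_leftStep hg ht] using hlim

end RiemannStieltjes

section Ruin

variable {g : ℝ → ℝ} {r x t : ℝ}

theorem OU_neg_iff {s : ℝ} :
    OU r x g s < 0 ↔ x < lsInt g (fun u => Real.exp (-(r * u))) s := by
  rw [OU, mul_neg_iff]
  simp [Real.exp_pos, (Real.exp_pos _).not_gt]

theorem ofReal_lt_ruinTime (hg : IsStieltjesPath g) (ht : 0 ≤ t)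
    (h : lsInt g (fun s => Real.exp (-(r * s))) t < x) : ENNReal.ofReal t < ruinTime r x g := by
  have hcont : Continuous fun s => Real.exp (-(r * s)) := by fun_prop
  obtain ⟨u, hux, htu⟩ : ∃ u, lsInt g (fun s => Real.exp (-(r * s))) u < x ∧ t < u :=
    ((((continuousWithinAt_lsInt hg hcont ht).mono Ioi_subset_Ici_self).eventually_lt_const h).and
      self_mem_nhdsWithin).exists
  refine ((ENNReal.ofReal_lt_ofReal_iff (ht.trans_lt htu)).2 htu).trans_le
    (le_iInf₂ fun s hs => ENNReal.ofReal_le_ofReal ?_)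
  by_contra! hsu
  have := lsInt_mono (g := g) hcont (fun _ => (Real.exp_pos _).le) hsu.le
  linarith [OU_neg_iff.1 hs.2]

theorem ruinTime_le_ofReal (hx : 0 ≤ x) (h : x < lsInt g (fun s => Real.exp (-(r * s))) t) :
    ruinTime r x g ≤ ENNReal.ofReal t := by
  have ht : 0 < t := by
    by_contra! ht
    rw [lsInt_of_nonpos ht] at h
    linarith
  exact iInf₂_le t ⟨ht, OU_neg_iff.2 h⟩

end Ruin

section Distribution

variable {Ω : Type*} [MeasurableSpace Ω] {μ : Measure Ω}

theorem ae_measure_le_eq_measure_lt (A : Ω → ℝ) :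
    ∀ᵐ x : ℝ, μ {ω | A ω ≤ x} = μ {ω | A ω < x} := by
  rw [ae_iff]
  refine measure_mono_null ?_
    (((countable_meas_le_ne_meas_lt μ fun ω => -A ω).image Neg.neg).measure_zero volume)
  intro x hx
  refine ⟨-x, ?_, neg_neg x⟩
  simpa [neg_le_neg_iff, neg_lt_neg_iff] using hx

theorem measure_lt_ruinTime_eq {Z : ℝ → Ω → ℝ} {A : Ω → ℝ} {r x t : ℝ}
    (hpath : ∀ᵐ ω ∂μ, IsStieltjesPath fun s => Z s ω)
    (hA : (fun ω => lsInt (fun s => Z s ω) (fun s => Real.exp (-(r * s))) t) =ᵐ[μ] A)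
    (ht : 0 ≤ t) (hx : 0 ≤ x) (hatom : μ {ω | A ω ≤ x} = μ {ω | A ω < x}) :
    μ {ω | ENNReal.ofReal t < ruinTime r x fun s => Z s ω} = μ {ω | A ω ≤ x} := by
  refine le_antisymm (measure_mono_ae ?_) (hatom ▸ measure_mono_ae ?_)
  · filter_upwards [hA] with ω hAω hω
    show A ω ≤ x
    by_contra! hlt
    exact (ruinTime_le_ofReal hx (hAω ▸ hlt)).not_gt hω
  · filter_upwards [hpath, hA] with ω hω hAω hlt
    exact ofReal_lt_ruinTime hω ht (hAω ▸ hlt)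

theorem setLIntegral_Ioi_indicator_Ici_exp {β a : ℝ} (hβ : 0 < β) (ha : 0 ≤ a) :
    ∫⁻ x in Ioi 0, (Ici a).indicator (fun x => ENNReal.ofReal (β * Real.exp (-(β * x)))) x =
      ENNReal.ofReal (Real.exp (-(β * a))) := by
  have hint : IntegrableOn (fun x => β * Real.exp (-(β * x))) (Ioi a) := by
    have := (exp_neg_integrableOn_Ioi a hβ).const_mul β
    simp only [neg_mul] at this
    exact this
  rw [lintegral_indicator measurableSet_Ici, Measure.restrict_restrict measurableSet_Ici,
    Measure.restrict_congr_set
      ((Ioi_ae_eq_Ici (μ := volume) (a := a)).symm.inter (ae_eq_refl (Ioi 0))),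
    inter_eq_left.2 (Ioi_subset_Ioi ha),
    ← ofReal_integral_eq_lintegral_ofReal hint (Eventually.of_forall fun _ => by positivity),
    integral_const_mul]
  simp only [← neg_mul]
  rw [integral_exp_mul_Ioi (neg_lt_zero.2 hβ)]
  congr 1
  field_simp

theorem setIntegral_Ioi_exp_mul_measure_le [IsFiniteMeasure μ] {A : Ω → ℝ} (hA : Measurable A)
    (hA0 : ∀ᵐ ω ∂μ, 0 ≤ A ω) {β : ℝ} (hβ : 0 < β) :
    ∫ x in Ioi 0, β * Real.exp (-(β * x)) * (μ {ω | A ω ≤ x}).toReal =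
      ∫ ω, Real.exp (-(β * A ω)) ∂μ := by
  set q : ℝ → ℝ≥0∞ := fun x => ENNReal.ofReal (β * Real.exp (-(β * x)))
  have hq : Measurable q :=
    (by fun_prop : Measurable fun x : ℝ => β * Real.exp (-(β * x))).ennreal_ofReal
  have hF : Measurable (Function.uncurry fun ω x => (Ici (A ω)).indicator q x) :=
    (hq.comp measurable_snd).indicator (measurableSet_le (hA.comp measurable_fst) measurable_snd)
  have hcdf : Monotone fun x => (μ {ω | A ω ≤ x}).toReal := fun x y hxy =>
    ENNReal.toReal_mono (measure_ne_top μ _) (measure_mono fun ω h => le_trans h hxy)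
  have hmeas : Measurable fun x => β * Real.exp (-(β * x)) * (μ {ω | A ω ≤ x}).toReal :=
    (by fun_prop : Measurable fun x : ℝ => β * Real.exp (-(β * x))).mul hcdf.measurable
  calc ∫ x in Ioi 0, β * Real.exp (-(β * x)) * (μ {ω | A ω ≤ x}).toReal
      = (∫⁻ x in Ioi 0, q x * μ {ω | A ω ≤ x}).toReal := by
        rw [integral_eq_lintegral_of_nonneg_ae (Eventually.of_forall fun x => by positivity)
          hmeas.aestronglyMeasurable]
        congr 1
        refine lintegral_congr fun x => ?_
        rw [ENNReal.ofReal_mul (by positivity), ENNReal.ofReal_toReal (measure_ne_top μ _)]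
    _ = (∫⁻ x in Ioi 0, ∫⁻ ω, (Ici (A ω)).indicator q x ∂μ).toReal := by
        congr 1
        exact lintegral_congr fun x => (lintegral_indicator_const (hA measurableSet_Iic) (q x)).symm
    _ = (∫⁻ ω, (∫⁻ x in Ioi 0, (Ici (A ω)).indicator q x) ∂μ).toReal := by
        rw [lintegral_lintegral_swap hF.aemeasurable]
    _ = (∫⁻ ω, ENNReal.ofReal (Real.exp (-(β * A ω))) ∂μ).toReal := by
        rw [lintegral_congr_ae (hA0.mono fun ω h => setLIntegral_Ioi_indicator_Ici_exp hβ h)]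
    _ = ∫ ω, Real.exp (-(β * A ω)) ∂μ := by
        rw [integral_eq_lintegral_of_nonneg_ae (Eventually.of_forall fun _ => (Real.exp_pos _).le)
          (by fun_prop : Measurable fun ω => Real.exp (-(β * A ω))).aestronglyMeasurable]

end Distribution

section LaplaceExponent

variable {ν : Measure ℝ} {φ : ℝ → ℝ}

theorem norm_one_sub_exp_neg_mul_le {b y : ℝ} (hb : 0 ≤ b) (hy : 0 ≤ y) :
    ‖1 - Real.exp (-(b * y))‖ ≤ max 1 b * min 1 y := by
  have hby : 0 ≤ b * y := mul_nonneg hb hy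
  rw [Real.norm_eq_abs, abs_of_nonneg (by linarith [Real.exp_le_one_iff.2 (neg_nonpos.2 hby)])]
  rcases le_total y 1 with hy1 | hy1
  · calc 1 - Real.exp (-(b * y)) ≤ b * y := by linarith [Real.add_one_le_exp (-(b * y))]
      _ ≤ max 1 b * min 1 y := by rw [min_eq_right hy1]; gcongr; exact le_max_right 1 b
  · calc 1 - Real.exp (-(b * y)) ≤ 1 := by linarith [Real.exp_pos (-(b * y))]
      _ ≤ max 1 b * min 1 y := by rw [min_eq_left hy1, mul_one]; exact le_max_left 1 b

theorem continuousOn_laplaceExponent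
    (hν : ∫⁻ y in Ioi (0 : ℝ), ENNReal.ofReal (min 1 y) ∂ν < ⊤)
    (hφ : ∀ b ≥ (0 : ℝ), φ b = ∫ y in Ioi (0 : ℝ), (1 - Real.exp (-(b * y))) ∂ν) :
    ContinuousOn φ (Ioi 0) := by
  have hmin : IntegrableOn (fun y => min 1 y) (Ioi 0) ν :=
    ⟨by fun_prop, (hasFiniteIntegral_iff_ofReal <| (ae_restrict_iff' measurableSet_Ioi).2 <|
      Eventually.of_forall fun y (hy : 0 < y) => le_min zero_le_one hy.le).2 hν⟩
  intro b₀ hb₀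
  have hcont : ContinuousAt (fun b => ∫ y in Ioi (0 : ℝ), (1 - Real.exp (-(b * y))) ∂ν) b₀ := by
    refine continuousAt_of_dominated (Eventually.of_forall fun b => by fun_prop) ?_
      (hmin.const_mul (max 1 (b₀ + 1))) (Eventually.of_forall fun y => by fun_prop)
    filter_upwards [Ioo_mem_nhds hb₀ (lt_add_one b₀)] with b hb
    refine (ae_restrict_iff' measurableSet_Ioi).2 (Eventually.of_forall fun y (hy : 0 < y) => ?_)
    exact (norm_one_sub_exp_neg_mul_le hb.1.le hy.le).trans
      (by gcongr; exact hb.2.le)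
  refine (hcont.congr ?_).continuousWithinAt
  filter_upwards [Ioi_mem_nhds hb₀] with b hb
  exact (hφ b (le_of_lt hb)).symm

end LaplaceExponent

section Subordinator

variable {Ω : Type*} [MeasurableSpace Ω] {μ : Measure Ω} {Z : ℝ → Ω → ℝ} {φ : ℝ → ℝ}

theorem measurable_riemannStieltjesSum (hZmeas : ∀ t, Measurable (Z t)) (f : ℝ → ℝ) (t : ℝ)
    (n : ℕ) : Measurable fun ω => riemannStieltjesSum f (fun s => Z s ω) t n :=
  Finset.measurable_sum _ fun _ _ => measurable_const.mul ((hZmeas _).sub (hZmeas _))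

theorem aemeasurable_lsInt (hZmeas : ∀ t, Measurable (Z t))
    (hpath : ∀ᵐ ω ∂μ, IsStieltjesPath fun s => Z s ω) {f : ℝ → ℝ} (hf : Continuous f) {t : ℝ}
    (ht : 0 ≤ t) : AEMeasurable (fun ω => lsInt (fun s => Z s ω) f t) μ :=
  aemeasurable_of_tendsto_metrizable_ae'
    (fun n => (measurable_riemannStieltjesSum hZmeas f t n).aemeasurable)
    (hpath.mono fun _ hω => tendsto_riemannStieltjesSum hω hf ht)

theorem integral_exp_neg_mul_sub (hZmeas : ∀ t, Measurable (Z t))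
    (hLaplace : ∀ β ≥ (0 : ℝ), ∀ t ≥ (0 : ℝ),
      ∫ ω, Real.exp (-(β * Z t ω)) ∂μ = Real.exp (-(t * φ β)))
    (hstat : ∀ s t : ℝ, 0 ≤ s → s ≤ t →
      Measure.map (fun ω => Z t ω - Z s ω) μ = Measure.map (Z (t - s)) μ)
    {a b c : ℝ} (ha : 0 ≤ a) (hab : a ≤ b) (hc : 0 ≤ c) :
    ∫ ω, Real.exp (-(c * (Z b ω - Z a ω))) ∂μ = Real.exp (-((b - a) * φ c)) := by
  have hexp : Continuous fun y : ℝ => Real.exp (-(c * y)) := by fun_prop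
  calc ∫ ω, Real.exp (-(c * (Z b ω - Z a ω))) ∂μ
      = ∫ y, Real.exp (-(c * y)) ∂(Measure.map (fun ω => Z b ω - Z a ω) μ) :=
        (integral_map ((hZmeas b).sub (hZmeas a)).aemeasurable hexp.aestronglyMeasurable).symm
    _ = ∫ ω, Real.exp (-(c * Z (b - a) ω)) ∂μ := by
        rw [hstat a b ha hab, integral_map (hZmeas _).aemeasurable hexp.aestronglyMeasurable]
    _ = Real.exp (-((b - a) * φ c)) := hLaplace c hc (b - a) (sub_nonneg.2 hab)

theorem integral_exp_neg_sum_mul_increments [IsProbabilityMeasure μ]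
    (hZmeas : ∀ t, Measurable (Z t))
    (hLaplace : ∀ β ≥ (0 : ℝ), ∀ t ≥ (0 : ℝ),
      ∫ ω, Real.exp (-(β * Z t ω)) ∂μ = Real.exp (-(t * φ β)))
    (hindep : ∀ n : ℕ, ∀ t : Fin (n + 1) → ℝ, Monotone t → (∀ i, 0 ≤ t i) →
      iIndepFun (fun i : Fin n => fun ω => Z (t i.succ) ω - Z (t i.castSucc) ω) μ)
    (hstat : ∀ s t : ℝ, 0 ≤ s → s ≤ t →
      Measure.map (fun ω => Z t ω - Z s ω) μ = Measure.map (Z (t - s)) μ)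
    {n : ℕ} {τ : Fin (n + 1) → ℝ} (hτ : Monotone τ) (hτ0 : ∀ i, 0 ≤ τ i)
    {c : Fin n → ℝ} (hc : ∀ i, 0 ≤ c i) :
    ∫ ω, Real.exp (-∑ i, c i * (Z (τ i.succ) ω - Z (τ i.castSucc) ω)) ∂μ =
      Real.exp (-∑ i, (τ i.succ - τ i.castSucc) * φ (c i)) := by
  have hind := (hindep n τ hτ hτ0).comp (fun i y => Real.exp (-(c i * y))) fun i => by fun_prop
  calc ∫ ω, Real.exp (-∑ i, c i * (Z (τ i.succ) ω - Z (τ i.castSucc) ω)) ∂μ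
      = ∫ ω, ∏ i, Real.exp (-(c i * (Z (τ i.succ) ω - Z (τ i.castSucc) ω))) ∂μ := by
        simp_rw [← Finset.sum_neg_distrib, Real.exp_sum]
    _ = ∏ i, ∫ ω, Real.exp (-(c i * (Z (τ i.succ) ω - Z (τ i.castSucc) ω))) ∂μ :=
        hind.integral_fun_prod_eq_prod_integral fun _ =>
          ((hZmeas _).sub (hZmeas _)).const_mul _ |>.neg.exp.aestronglyMeasurable
    _ = ∏ i, Real.exp (-((τ i.succ - τ i.castSucc) * φ (c i))) :=
        Finset.prod_congr rfl fun i _ => integral_exp_neg_mul_sub hZmeas hLaplace hstat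
          (hτ0 _) (hτ (Fin.castSucc_le_succ i)) (hc i)
    _ = Real.exp (-∑ i, (τ i.succ - τ i.castSucc) * φ (c i)) := by
        rw [← Finset.sum_neg_distrib, Real.exp_sum]

theorem integral_exp_neg_riemannStieltjesSum [IsProbabilityMeasure μ]
    (hZmeas : ∀ t, Measurable (Z t))
    (hLaplace : ∀ β ≥ (0 : ℝ), ∀ t ≥ (0 : ℝ),
      ∫ ω, Real.exp (-(β * Z t ω)) ∂μ = Real.exp (-(t * φ β)))
    (hindep : ∀ n : ℕ, ∀ t : Fin (n + 1) → ℝ, Monotone t → (∀ i, 0 ≤ t i) →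
      iIndepFun (fun i : Fin n => fun ω => Z (t i.succ) ω - Z (t i.castSucc) ω) μ)
    (hstat : ∀ s t : ℝ, 0 ≤ s → s ≤ t →
      Measure.map (fun ω => Z t ω - Z s ω) μ = Measure.map (Z (t - s)) μ)
    {f : ℝ → ℝ} (hf : ∀ s, 0 ≤ f s) {t : ℝ} (ht : 0 ≤ t) (n : ℕ) :
    ∫ ω, Real.exp (-riemannStieltjesSum f (fun s => Z s ω) t n) ∂μ =
      Real.exp (-riemannStieltjesSum (fun s => φ (f s)) id t n) := by
  have hgrid : Monotone fun i : Fin (n + 1) => (i : ℝ) * (t / n) := fun i j hij =>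
    mul_le_mul_of_nonneg_right (by exact_mod_cast hij) (by positivity)
  have key := integral_exp_neg_sum_mul_increments hZmeas hLaplace hindep hstat hgrid
    (fun i => by positivity) (c := fun i => f (i * (t / n))) fun i => hf _
  simp only [Fin.val_succ, Fin.val_castSucc, Nat.cast_add, Nat.cast_one] at key
  simp only [riemannStieltjesSum, ← Fin.sum_univ_eq_sum_range, id]
  convert key using 4
  ring

theorem integral_exp_neg_lsInt [IsProbabilityMeasure μ] {ν : Measure ℝ}
    (hZmeas : ∀ t, Measurable (Z t))
    (hpath : ∀ᵐ ω ∂μ, IsStieltjesPath fun s => Z s ω)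
    (hν : ∫⁻ y in Ioi (0 : ℝ), ENNReal.ofReal (min 1 y) ∂ν < ⊤)
    (hφ : ∀ β ≥ (0 : ℝ), φ β = ∫ y in Ioi (0 : ℝ), (1 - Real.exp (-(β * y))) ∂ν)
    (hLaplace : ∀ β ≥ (0 : ℝ), ∀ t ≥ (0 : ℝ),
      ∫ ω, Real.exp (-(β * Z t ω)) ∂μ = Real.exp (-(t * φ β)))
    (hindep : ∀ n : ℕ, ∀ t : Fin (n + 1) → ℝ, Monotone t → (∀ i, 0 ≤ t i) →
      iIndepFun (fun i : Fin n => fun ω => Z (t i.succ) ω - Z (t i.castSucc) ω) μ)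
    (hstat : ∀ s t : ℝ, 0 ≤ s → s ≤ t →
      Measure.map (fun ω => Z t ω - Z s ω) μ = Measure.map (Z (t - s)) μ)
    {f : ℝ → ℝ} (hf : Continuous f) (hf0 : ∀ s, 0 < f s) {t : ℝ} (ht : 0 ≤ t) :
    ∫ ω, Real.exp (-lsInt (fun s => Z s ω) f t) ∂μ = Real.exp (-∫ s in Ioc 0 t, φ (f s)) := by
  have hlhs : Tendsto (fun n => ∫ ω, Real.exp (-riemannStieltjesSum f (fun s => Z s ω) t n) ∂μ)
      atTop (𝓝 (∫ ω, Real.exp (-lsInt (fun s => Z s ω) f t) ∂μ)) := by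
    refine tendsto_integral_of_dominated_convergence (fun _ => 1)
      (fun n => (measurable_riemannStieltjesSum hZmeas f t n).neg.exp.aestronglyMeasurable)
      (integrable_const 1) (fun n => ?_) (hpath.mono fun ω hω =>
        (Real.continuous_exp.tendsto _).comp (tendsto_riemannStieltjesSum hω hf ht).neg)
    filter_upwards [hpath] with ω hω
    rw [Real.norm_eq_abs, abs_of_pos (Real.exp_pos _), Real.exp_le_one_iff, neg_nonpos]
    exact riemannStieltjesSum_nonneg hω.1 (fun s => (hf0 s).le) ht n
  have hrhs : Tendsto (fun n => Real.exp (-riemannStieltjesSum (fun s => φ (f s)) id t n))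
      atTop (𝓝 (Real.exp (-∫ s in Ioc 0 t, φ (f s)))) := by
    have hsum := tendsto_riemannStieltjesSum isStieltjesPath_id
      ((continuousOn_laplaceExponent hν hφ).comp_continuous hf hf0) ht
    rw [lsInt, stMeasure_id] at hsum
    exact (Real.continuous_exp.tendsto _).comp hsum.neg
  simp_rw [integral_exp_neg_riemannStieltjesSum hZmeas hLaplace hindep hstat (fun s => (hf0 s).le)
    ht] at hlhs
  exact tendsto_nhds_unique hlhs hrhs

end Subordinator

theorem stmt_1_general
    {Ω : Type} [MeasurableSpace Ω] (μ : Measure Ω) [IsProbabilityMeasure μ]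
    (Z : ℝ → Ω → ℝ) (ν : Measure ℝ) (φ : ℝ → ℝ) (r : ℝ)
    (hZmeas : ∀ t, Measurable (Z t))
    (hpath : ∀ᵐ ω ∂μ, Monotone (fun s => Z s ω) ∧
      ∀ x, ContinuousWithinAt (fun s => Z s ω) (Set.Ici x) x)
    (hν : ∫⁻ y in Set.Ioi (0 : ℝ), ENNReal.ofReal (min 1 y) ∂ν < ⊤)
    (hφ : ∀ β ≥ (0 : ℝ), φ β = ∫ y in Set.Ioi (0 : ℝ), (1 - Real.exp (-(β * y))) ∂ν)
    (hLaplace : ∀ β ≥ (0 : ℝ), ∀ t ≥ (0 : ℝ),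
      ∫ ω, Real.exp (-(β * Z t ω)) ∂μ = Real.exp (-(t * φ β)))
    (hindep : ∀ n : ℕ, ∀ t : Fin (n + 1) → ℝ, Monotone t → (∀ i, 0 ≤ t i) →
      iIndepFun
        (fun i : Fin n => fun ω => Z (t i.succ) ω - Z (t i.castSucc) ω) μ)
    (hstat : ∀ s t : ℝ, 0 ≤ s → s ≤ t →
      Measure.map (fun ω => Z t ω - Z s ω) μ = Measure.map (Z (t - s)) μ)
    (β t : ℝ) (hβ : 0 < β) (ht : 0 ≤ t) :
    ∫ x in Set.Ioi (0 : ℝ), β * Real.exp (-(β * x)) *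
        (μ {ω | ENNReal.ofReal t < ruinTime r x (fun s => Z s ω)}).toReal =
      Real.exp (-(∫ s in (0:ℝ)..t, φ (β * Real.exp (-(r * s))))) := by
  obtain ⟨A, hAm, hAA⟩ :=
    aemeasurable_lsInt hZmeas hpath (f := fun s => Real.exp (-(r * s))) (by fun_prop) ht
  have hA0 : ∀ᵐ ω ∂μ, 0 ≤ A ω := by
    filter_upwards [hAA] with ω h
    exact h ▸ lsInt_nonneg fun _ => (Real.exp_pos _).le
  calc _ = ∫ x in Ioi 0, β * Real.exp (-(β * x)) * (μ {ω | A ω ≤ x}).toReal := by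
        refine setIntegral_congr_ae measurableSet_Ioi ?_
        filter_upwards [ae_measure_le_eq_measure_lt A] with x hx (hx0 : 0 < x)
        rw [measure_lt_ruinTime_eq hpath hAA ht hx0.le hx]
    _ = ∫ ω, Real.exp (-(β * A ω)) ∂μ := setIntegral_Ioi_exp_mul_measure_le hAm hA0 hβ
    _ = ∫ ω, Real.exp (-lsInt (fun s => Z s ω) (fun s => β * Real.exp (-(r * s))) t) ∂μ := by
        refine integral_congr_ae ?_
        filter_upwards [hAA] with ω h
        rw [← h, lsInt, lsInt, integral_const_mul]
    _ = _ := by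
        rw [integral_exp_neg_lsInt hZmeas hpath hν hφ hLaplace hindep hstat (by fun_prop)
          (fun s => mul_pos hβ (Real.exp_pos _)) ht, intervalIntegral.integral_of_le ht]

/-- for every `β > 0` and `t ≥ 0`,
`∫_0^∞ β e^{-βx} P(τ₀ > t | X_0 = x) dx = exp(-∫_0^t φ(β e^{-rs}) ds)`. -/
theorem stmt_1
    {Ω : Type} [MeasurableSpace Ω] (μ : Measure Ω) [IsProbabilityMeasure μ]
    (Z : ℝ → Ω → ℝ) (ν : Measure ℝ) (φ : ℝ → ℝ) (r : ℝ) (hr : 0 < r)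
    (hZmeas : ∀ t, Measurable (Z t))
    (hZ0 : ∀ ω, ∀ s ≤ (0 : ℝ), Z s ω = 0)
    (hpath : ∀ᵐ ω ∂μ, Monotone (fun s => Z s ω) ∧
      ∀ x, ContinuousWithinAt (fun s => Z s ω) (Set.Ici x) x)
    (hν : ∫⁻ y in Set.Ioi (0 : ℝ), ENNReal.ofReal (min 1 y) ∂ν < ⊤)
    (hφ : ∀ β ≥ (0 : ℝ), φ β = ∫ y in Set.Ioi (0 : ℝ), (1 - Real.exp (-(β * y))) ∂ν)
    (hLaplace : ∀ β ≥ (0 : ℝ), ∀ t ≥ (0 : ℝ),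
      ∫ ω, Real.exp (-(β * Z t ω)) ∂μ = Real.exp (-(t * φ β)))
    (hindep : ∀ n : ℕ, ∀ t : Fin (n + 1) → ℝ, Monotone t → (∀ i, 0 ≤ t i) →
      iIndepFun
        (fun i : Fin n => fun ω => Z (t i.succ) ω - Z (t i.castSucc) ω) μ)
    (hstat : ∀ s t : ℝ, 0 ≤ s → s ≤ t →
      Measure.map (fun ω => Z t ω - Z s ω) μ = Measure.map (Z (t - s)) μ)
    (β t : ℝ) (hβ : 0 < β) (ht : 0 ≤ t) :
    ∫ x in Set.Ioi (0 : ℝ), β * Real.exp (-(β * x)) *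
        (μ {ω | ENNReal.ofReal t < ruinTime r x (fun s => Z s ω)}).toReal =
      Real.exp (-(∫ s in (0:ℝ)..t, φ (β * Real.exp (-(r * s))))) :=
  stmt_1_general μ Z ν φ r hZmeas hpath hν hφ hLaplace hindep hstat β t hβ ht
end

section
/- If ∫_1^∞ log(y) ν(dy) = ∞, then absolute ruin is certain: for every x > 0, P(τ_0 < ∞ | X_0 = x) = 1. -/
/-!
Let `A_n` be the event that the increment `Z_{n+1} - Z_n` exceeds `x e^{r(n+1)}`. Since
`e^{-rs} ≥ e^{-r(n+1)}` on `(n, n+1]`, on `A_n` the discounted claims up to time `n+1` exceed `x`,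
so `X_{n+1} < 0`. The `A_n` are independent, and by stationarity `P(A_n) = P(Z_1 > x e^{r(n+1)})`.
Bounding `1 - e^{-Z_1/B}` by `1_{Z_1 > y} + y/B` gives `P(Z_1 > y) ≥ 1 - e^{-φ(1/B)} - y/B`, and
`φ(1/B) ≥ (1 - e^{-1}) ν(B, ∞)`. The condition `∫ log y ν(dy) = ∞` forces the
divergence of `∑ ν(c a^n, ∞)` for `a > 1`, so `∑ P(A_n) = ∞` and the second Borel–Cantelli lemma
gives ruin almost surely.
-/

open MeasureTheory ProbabilityTheory Filter
open scoped ENNReal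

open Set

lemma one_sub_exp_neg_one_mul_min_le {u : ℝ} (hu : 0 ≤ u) :
    (1 - Real.exp (-1)) * min u 1 ≤ 1 - Real.exp (-u) := by
  rcases le_total u 1 with h | h
  · rw [min_eq_left h]
    -- convexity of `exp` between `-1` and `0`
    have hconv := convexOn_exp.2 (mem_univ (0 : ℝ)) (mem_univ (-1 : ℝ))
      (sub_nonneg.2 h) hu (by ring)
    simp only [smul_eq_mul, mul_zero, zero_add, mul_neg, mul_one, Real.exp_zero] at hconv
    nlinarith
  · rw [min_eq_right h]
    have : Real.exp (-u) ≤ Real.exp (-1) := Real.exp_le_exp.2 (by linarith)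
    linarith

lemma one_sub_exp_neg_mul_nonneg {β y : ℝ} (hβ : 0 ≤ β) (hy : 0 ≤ y) :
    0 ≤ 1 - Real.exp (-(β * y)) :=
  sub_nonneg.2 (Real.exp_le_one_iff.2 (by nlinarith))

lemma one_sub_exp_neg_mul_le {β y : ℝ} (hy : 0 ≤ y) :
    1 - Real.exp (-(β * y)) ≤ max β 1 * min 1 y := by
  rcases le_total y 1 with h | h
  · rw [min_eq_right h]
    exact (sub_le_comm.1 (Real.one_sub_le_exp_neg _)).trans
      (mul_le_mul_of_nonneg_right (le_max_left _ _) hy)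
  · rw [min_eq_left h, mul_one]
    linarith [Real.exp_pos (-(β * y)), le_max_right β 1]

section LevyMeasure

variable {ν : Measure ℝ}

lemma measure_Ioi_ne_top_of_lintegral_min_lt_top
    (hν : ∫⁻ y in Ioi (0 : ℝ), ENNReal.ofReal (min 1 y) ∂ν < ⊤) {M : ℝ} (hM : 1 ≤ M) :
    ν (Ioi M) ≠ ⊤ := by
  refine ne_top_of_le_ne_top hν.ne ?_
  calc ν (Ioi M) = ∫⁻ _ in Ioi M, 1 ∂ν := (setLIntegral_one _).symm
    _ ≤ ∫⁻ y in Ioi M, ENNReal.ofReal (min 1 y) ∂ν :=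
        setLIntegral_mono (by fun_prop) fun y hy => by
          rw [min_eq_left (hM.trans (le_of_lt hy)), ENNReal.ofReal_one]
    _ ≤ _ := lintegral_mono_set (Ioi_subset_Ioi (zero_le_one.trans hM))

lemma integrableOn_one_sub_exp_neg_mul
    (hν : ∫⁻ y in Ioi (0 : ℝ), ENNReal.ofReal (min 1 y) ∂ν < ⊤) {β : ℝ} (hβ : 0 ≤ β) :
    IntegrableOn (fun y => 1 - Real.exp (-(β * y))) (Ioi 0) ν := by
  refine ⟨by fun_prop, ?_⟩
  rw [hasFiniteIntegral_def]
  calc ∫⁻ y in Ioi 0, ‖1 - Real.exp (-(β * y))‖ₑ ∂ν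
      ≤ ∫⁻ y in Ioi 0, ENNReal.ofReal (max β 1) * ENNReal.ofReal (min 1 y) ∂ν := by
        refine setLIntegral_mono (by fun_prop) fun y (hy : 0 < y) => ?_
        rw [Real.enorm_eq_ofReal (one_sub_exp_neg_mul_nonneg hβ hy.le),
          ← ENNReal.ofReal_mul (hβ.trans (le_max_left _ _))]
        exact ENNReal.ofReal_le_ofReal (one_sub_exp_neg_mul_le hy.le)
    _ < ⊤ := by
        rw [lintegral_const_mul _ (by fun_prop)]
        exact ENNReal.mul_lt_top ENNReal.ofReal_lt_top hν

lemma mul_measureReal_Ioi_le_integral_one_sub_exp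
    (hν : ∫⁻ y in Ioi (0 : ℝ), ENNReal.ofReal (min 1 y) ∂ν < ⊤) {B M : ℝ} (hB : 0 < B)
    (hBM : B ≤ M) (hM : 1 ≤ M) :
    (1 - Real.exp (-1)) * ν.real (Ioi M) ≤
      ∫ y in Ioi 0, (1 - Real.exp (-(B⁻¹ * y))) ∂ν := by
  have hint := integrableOn_one_sub_exp_neg_mul hν (inv_pos.2 hB).le
  have hMfin := measure_Ioi_ne_top_of_lintegral_min_lt_top hν hM
  calc (1 - Real.exp (-1)) * ν.real (Ioi M) = ∫ _ in Ioi M, (1 - Real.exp (-1)) ∂ν := by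
        rw [setIntegral_const, smul_eq_mul, mul_comm]
    _ ≤ ∫ y in Ioi M, (1 - Real.exp (-(B⁻¹ * y))) ∂ν := by
        refine setIntegral_mono_on (integrableOn_const hMfin)
          (hint.mono_set (Ioi_subset_Ioi (hB.le.trans hBM))) measurableSet_Ioi
          fun y (hy : M < y) => ?_
        have : 1 ≤ B⁻¹ * y := by
          rw [← inv_mul_cancel₀ hB.ne']
          exact mul_le_mul_of_nonneg_left (hBM.trans hy.le) (inv_pos.2 hB).le
        linarith [Real.exp_le_exp.2 (neg_le_neg this)]
    _ ≤ ∫ y in Ioi 0, (1 - Real.exp (-(B⁻¹ * y))) ∂ν :=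
        setIntegral_mono_set hint
          ((ae_restrict_iff' measurableSet_Ioi).2 (ae_of_all _ fun y (hy : 0 < y) =>
            one_sub_exp_neg_mul_nonneg (inv_pos.2 hB).le hy.le))
          (Ioi_subset_Ioi (hB.le.trans hBM)).eventuallyLE

end LevyMeasure

lemma ofReal_log_le_add_mul_tsum_indicator {a c y : ℝ} (ha : 1 < a) (hc : 1 ≤ c) (hy : 0 < y) :
    ENNReal.ofReal (Real.log y) ≤ ENNReal.ofReal (Real.log c) +
      ENNReal.ofReal (Real.log a) * ∑' n : ℕ, (Ioi (c * a ^ n)).indicator 1 y := by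
  have hex : ∃ n : ℕ, y ≤ c * a ^ n := by
    obtain ⟨n, hn⟩ := pow_unbounded_of_one_lt y ha
    exact ⟨n, hn.le.trans (le_mul_of_one_le_left (by positivity) hc)⟩
  -- `k` is the first index with `y ≤ c a^k`; all earlier indices are counted by the sum
  set k := Nat.find hex
  have hk_count : (k : ℝ≥0∞) ≤ ∑' n : ℕ, (Ioi (c * a ^ n)).indicator 1 y := by
    have hearly : ∀ n ∈ Finset.range k, (Ioi (c * a ^ n)).indicator (1 : ℝ → ℝ≥0∞) y = 1 :=
      fun n hn => indicator_of_mem (lt_of_not_ge (Nat.find_min hex (Finset.mem_range.1 hn))) _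
    calc (k : ℝ≥0∞) = ∑ n ∈ Finset.range k, (Ioi (c * a ^ n)).indicator 1 y := by
          simp [Finset.sum_congr rfl hearly]
      _ ≤ _ := ENNReal.sum_le_tsum _
  have hlog : Real.log y ≤ Real.log c + k * Real.log a := by
    have := Real.log_le_log hy (Nat.find_spec hex)
    rwa [Real.log_mul (by positivity) (by positivity), Real.log_pow] at this
  calc ENNReal.ofReal (Real.log y) ≤ ENNReal.ofReal (Real.log c + k * Real.log a) :=
        ENNReal.ofReal_le_ofReal hlog
    _ ≤ ENNReal.ofReal (Real.log c) + ENNReal.ofReal (k * Real.log a) := ENNReal.ofReal_add_le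
    _ = ENNReal.ofReal (Real.log c) + ENNReal.ofReal (Real.log a) * k := by
        rw [mul_comm, ENNReal.ofReal_mul (Real.log_nonneg ha.le), ENNReal.ofReal_natCast]
    _ ≤ _ := by gcongr

lemma tsum_measure_Ioi_mul_pow_eq_top {ν : Measure ℝ} (hν : ν (Ioi 1) ≠ ⊤)
    (hlog : ∫⁻ y in Ioi (1 : ℝ), ENNReal.ofReal (Real.log y) ∂ν = ⊤) {a c : ℝ} (ha : 1 < a)
    (hc : 1 ≤ c) :
    ∑' n : ℕ, ν (Ioi (c * a ^ n)) = ⊤ := by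
  have hca : ∀ n : ℕ, 1 ≤ c * a ^ n :=
    fun n => one_le_mul_of_one_le_of_one_le hc (one_le_pow₀ ha.le)
  have hcount : Measurable fun y => ∑' n : ℕ, (Ioi (c * a ^ n)).indicator (1 : ℝ → ℝ≥0∞) y :=
    Measurable.tsum fun n => measurable_one.indicator measurableSet_Ioi
  have hbound : ⊤ ≤ ENNReal.ofReal (Real.log c) * ν (Ioi 1) +
      ENNReal.ofReal (Real.log a) * ∑' n : ℕ, ν (Ioi (c * a ^ n)) := by
    calc ⊤ = ∫⁻ y in Ioi (1 : ℝ), ENNReal.ofReal (Real.log y) ∂ν := hlog.symm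
      _ ≤ ∫⁻ y in Ioi (1 : ℝ), ENNReal.ofReal (Real.log c) +
            ENNReal.ofReal (Real.log a) * ∑' n : ℕ, (Ioi (c * a ^ n)).indicator 1 y ∂ν :=
          setLIntegral_mono ((hcount.const_mul _).const_add _) fun y (hy : 1 < y) =>
            ofReal_log_le_add_mul_tsum_indicator ha hc (zero_lt_one.trans hy)
      _ = _ := by
          rw [lintegral_add_left measurable_const, setLIntegral_const,
            lintegral_const_mul _ hcount,
            lintegral_tsum fun n => (measurable_one.indicator measurableSet_Ioi).aemeasurable]
          congr 2
          refine tsum_congr fun n => ?_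
          rw [lintegral_indicator_one measurableSet_Ioi, Measure.restrict_apply measurableSet_Ioi,
            inter_eq_left.2 (Ioi_subset_Ioi (hca n))]
  by_contra hsum
  exact ENNReal.add_ne_top.2 ⟨ENNReal.mul_ne_top ENNReal.ofReal_ne_top hν,
    ENNReal.mul_ne_top ENNReal.ofReal_ne_top hsum⟩ (top_le_iff.1 hbound)

lemma ENNReal.tsum_eq_top_of_mul_min_le_add {R P ε : ℕ → ℝ≥0∞} {K C : ℝ≥0∞} (hK : K ≠ 0)
    (hC : C ≠ ⊤) (hRC : ∀ n, R n ≤ C) (hR : ∑' n, R n = ⊤) (hε : ∑' n, ε n ≠ ⊤)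
    (h : ∀ n, K * min (R n) 1 ≤ P n + ε n) :
    ∑' n, P n = ⊤ := by
  have hmin : ∑' n, min (R n) 1 = ⊤ := by
    have : ∑' n, R n ≤ (C + 1) * ∑' n, min (R n) 1 := by
      rw [← ENNReal.tsum_mul_left]
      refine ENNReal.tsum_le_tsum fun n => ?_
      rcases le_total (R n) 1 with h1 | h1
      · rw [min_eq_left h1]
        exact le_mul_of_one_le_left' le_add_self
      · rw [min_eq_right h1, mul_one]
        exact (hRC n).trans le_self_add
    rw [hR, top_le_iff] at this
    by_contra hne
    exact ENNReal.mul_ne_top (ENNReal.add_ne_top.2 ⟨hC, ENNReal.one_ne_top⟩) hne this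
  have : ⊤ ≤ ∑' n, P n + ∑' n, ε n := by
    calc ⊤ = K * ∑' n, min (R n) 1 := by rw [hmin, ENNReal.mul_top hK]
      _ = ∑' n, K * min (R n) 1 := ENNReal.tsum_mul_left.symm
      _ ≤ ∑' n, (P n + ε n) := ENNReal.tsum_le_tsum h
      _ = ∑' n, P n + ∑' n, ε n := ENNReal.tsum_add
  by_contra hP
  exact ENNReal.add_ne_top.2 ⟨hP, hε⟩ (top_le_iff.1 this)

section LaplaceTail

variable {Ω : Type*} [MeasurableSpace Ω] {μ : Measure Ω} [IsProbabilityMeasure μ] {W : Ω → ℝ}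

lemma one_sub_integral_exp_neg_mul_le (hW : Measurable W) (hW0 : 0 ≤ᵐ[μ] W) {β y : ℝ}
    (hβ : 0 ≤ β) (hy : 0 ≤ y) :
    1 - ∫ ω, Real.exp (-(β * W ω)) ∂μ ≤ μ.real {ω | y < W ω} + β * y := by
  have hmeas : MeasurableSet {ω | y < W ω} := measurableSet_lt measurable_const hW
  have hexp : Integrable (fun ω => Real.exp (-(β * W ω))) μ := by
    refine .of_bound (by fun_prop) 1 ?_
    filter_upwards [hW0] with ω hω
    rw [Real.norm_eq_abs, abs_of_pos (Real.exp_pos _), Real.exp_le_one_iff]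
    exact neg_nonpos.2 (mul_nonneg hβ hω)
  calc 1 - ∫ ω, Real.exp (-(β * W ω)) ∂μ = ∫ ω, (1 - Real.exp (-(β * W ω))) ∂μ := by
        rw [integral_sub (integrable_const _) hexp, integral_const, probReal_univ, one_smul]
    _ ≤ ∫ ω, ({ω | y < W ω}.indicator 1 ω + β * y) ∂μ := by
        refine integral_mono_ae ((integrable_const _).sub hexp)
          (((integrable_indicator_iff hmeas).2 (integrable_const _).integrableOn).add
            (integrable_const _)) ?_
        filter_upwards [hW0] with ω hω
        by_cases hyW : y < W ω
        · simp only [indicator_of_mem (show ω ∈ {ω | y < W ω} from hyW), Pi.one_apply]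
          linarith [Real.exp_pos (-(β * W ω)), mul_nonneg hβ hy]
        · simp only [indicator_of_notMem (show ω ∉ {ω | y < W ω} from hyW), zero_add]
          exact (sub_le_comm.1 (Real.one_sub_le_exp_neg _)).trans
            (mul_le_mul_of_nonneg_left (not_lt.1 hyW) hβ)
    _ = μ.real {ω | y < W ω} + β * y := by
        rw [integral_add ((integrable_indicator_iff hmeas).2 (integrable_const _).integrableOn)
          (integrable_const _), integral_indicator_one hmeas, integral_const, probReal_univ,
          one_smul]

variable {ν : Measure ℝ}

lemma mul_min_measureReal_Ioi_le_measureReal_lt_add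
    (hν : ∫⁻ y in Ioi (0 : ℝ), ENNReal.ofReal (min 1 y) ∂ν < ⊤) (hW : Measurable W)
    (hW0 : 0 ≤ᵐ[μ] W) (hLap : ∀ β ≥ (0 : ℝ), ∫ ω, Real.exp (-(β * W ω)) ∂μ =
      Real.exp (-∫ y in Ioi (0 : ℝ), (1 - Real.exp (-(β * y))) ∂ν))
    {y B M : ℝ} (hy : 0 ≤ y) (hB : 0 < B) (hBM : B ≤ M) (hM : 1 ≤ M) :
    (1 - Real.exp (-1)) * min ((1 - Real.exp (-1)) * ν.real (Ioi M)) 1 ≤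
      μ.real {ω | y < W ω} + y / B := by
  have hβ : 0 ≤ B⁻¹ := (inv_pos.2 hB).le
  have hκ : 0 ≤ 1 - Real.exp (-1) := sub_nonneg.2 (Real.exp_le_one_iff.2 (by norm_num))
  have hexponent := mul_measureReal_Ioi_le_integral_one_sub_exp hν hB hBM hM
  have htail := one_sub_integral_exp_neg_mul_le hW hW0 hβ hy
  rw [hLap _ hβ] at htail
  calc (1 - Real.exp (-1)) * min ((1 - Real.exp (-1)) * ν.real (Ioi M)) 1
      ≤ (1 - Real.exp (-1)) * min (∫ y in Ioi 0, (1 - Real.exp (-(B⁻¹ * y))) ∂ν) 1 := by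
        gcongr
    _ ≤ 1 - Real.exp (-∫ y in Ioi 0, (1 - Real.exp (-(B⁻¹ * y))) ∂ν) :=
        one_sub_exp_neg_one_mul_min_le <| setIntegral_nonneg measurableSet_Ioi
          fun y (hy : 0 < y) => one_sub_exp_neg_mul_nonneg hβ hy.le
    _ ≤ μ.real {ω | y < W ω} + y / B := by rwa [div_eq_inv_mul]

/-- With `y = b q^n` and `B = b (2q)^n` the error terms `y / B = 2^{-n}` are summable, while the
main terms are comparable to `ν (c (2q)^n, ∞)`, whose sum diverges by the log-moment condition. -/
lemma tsum_measure_mul_pow_lt_eq_top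
    (hν : ∫⁻ y in Ioi (0 : ℝ), ENNReal.ofReal (min 1 y) ∂ν < ⊤)
    (hlog : ∫⁻ y in Ioi (1 : ℝ), ENNReal.ofReal (Real.log y) ∂ν = ⊤) (hW : Measurable W)
    (hW0 : 0 ≤ᵐ[μ] W) (hLap : ∀ β ≥ (0 : ℝ), ∫ ω, Real.exp (-(β * W ω)) ∂μ =
      Real.exp (-∫ y in Ioi (0 : ℝ), (1 - Real.exp (-(β * y))) ∂ν))
    {b q : ℝ} (hb : 0 < b) (hq : 1 ≤ q) :
    ∑' n : ℕ, μ {ω | b * q ^ n < W ω} = ⊤ := by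
  set κ : ℝ := 1 - Real.exp (-1)
  have hκ : 0 < κ := sub_pos.2 (Real.exp_lt_one_iff.2 (by norm_num))
  set c := max 1 b
  have ha : 1 < 2 * q := by linarith
  have hM : ∀ n : ℕ, 1 ≤ c * (2 * q) ^ n :=
    fun n => one_le_mul_of_one_le_of_one_le (le_max_left _ _) (one_le_pow₀ ha.le)
  have hMfin : ∀ n : ℕ, ν (Ioi (c * (2 * q) ^ n)) ≠ ⊤ :=
    fun n => measure_Ioi_ne_top_of_lintegral_min_lt_top hν (hM n)
  refine ENNReal.tsum_eq_top_of_mul_min_le_add (K := ENNReal.ofReal κ)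
    (R := fun n => ENNReal.ofReal κ * ν (Ioi (c * (2 * q) ^ n)))
    (C := ENNReal.ofReal κ * ν (Ioi 1)) (ε := fun n => ENNReal.ofReal ((1 / 2) ^ n))
    (ENNReal.ofReal_pos.2 hκ).ne'
    (ENNReal.mul_ne_top ENNReal.ofReal_ne_top
      (measure_Ioi_ne_top_of_lintegral_min_lt_top hν le_rfl))
    (fun n => by gcongr; exact hM n) ?_ ?_ fun n => ?_
  · rw [ENNReal.tsum_mul_left, tsum_measure_Ioi_mul_pow_eq_top
      (measure_Ioi_ne_top_of_lintegral_min_lt_top hν le_rfl) hlog ha (le_max_left _ _),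
      ENNReal.mul_top (ENNReal.ofReal_pos.2 hκ).ne']
  · rw [← ENNReal.ofReal_tsum_of_nonneg (fun n => by positivity) summable_geometric_two]
    exact ENNReal.ofReal_ne_top
  · have hbound := mul_min_measureReal_Ioi_le_measureReal_lt_add hν hW hW0 hLap
      (y := b * q ^ n) (B := b * (2 * q) ^ n) (M := c * (2 * q) ^ n) (by positivity)
      (by positivity) (by gcongr; exact le_max_right _ _) (hM n)
    have hratio : b * q ^ n / (b * (2 * q) ^ n) = (1 / 2) ^ n := by
      rw [mul_pow, div_pow, one_pow]
      field_simp
    rw [hratio] at hbound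
    calc ENNReal.ofReal κ * min (ENNReal.ofReal κ * ν (Ioi (c * (2 * q) ^ n))) 1
        = ENNReal.ofReal (κ * min (κ * ν.real (Ioi (c * (2 * q) ^ n))) 1) := by
          rw [ENNReal.ofReal_mul hκ.le, ENNReal.ofReal_min, ENNReal.ofReal_mul hκ.le,
            ofReal_measureReal (hMfin n), ENNReal.ofReal_one]
      _ ≤ ENNReal.ofReal (μ.real {ω | b * q ^ n < W ω} + (1 / 2) ^ n) :=
          ENNReal.ofReal_le_ofReal hbound
      _ ≤ μ {ω | b * q ^ n < W ω} + ENNReal.ofReal ((1 / 2) ^ n) := by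
          rw [ENNReal.ofReal_add measureReal_nonneg (by positivity), ofReal_measureReal]

end LaplaceTail

section Ruin

variable {g : ℝ → ℝ}

lemma stMeasure_eq_s4 (hg : Monotone g) (hg_rc : ∀ u, ContinuousWithinAt g (Ici u) u) :
    stMeasure g = (⟨g, hg, hg_rc⟩ : StieltjesFunction ℝ).measure := by
  rw [stMeasure, dif_pos ⟨hg, hg_rc⟩]

lemma mul_sub_le_lsInt (hg : Monotone g) (hg_rc : ∀ u, ContinuousWithinAt g (Ici u) u)
    {f : ℝ → ℝ} (hf : Continuous f) {m s t : ℝ} (hs : 0 ≤ s) (hst : s ≤ t)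
    (hf0 : ∀ u ∈ Ioc 0 t, 0 ≤ f u) (hfm : ∀ u ∈ Ioc s t, m ≤ f u) :
    m * (g t - g s) ≤ lsInt g f t := by
  set G : StieltjesFunction ℝ := ⟨g, hg, hg_rc⟩
  rw [lsInt, stMeasure_eq_s4 hg hg_rc]
  calc m * (g t - g s) = ∫ _ in Ioc s t, m ∂G.measure := by
        rw [setIntegral_const, measureReal_def, StieltjesFunction.measure_Ioc, smul_eq_mul,
          ENNReal.toReal_ofReal (sub_nonneg.2 (hg hst)), mul_comm]
    _ ≤ ∫ u in Ioc s t, f u ∂G.measure :=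
        setIntegral_mono_on (continuous_const.integrableOn_Ioc) hf.integrableOn_Ioc
          measurableSet_Ioc hfm
    _ ≤ ∫ u in Ioc 0 t, f u ∂G.measure :=
        setIntegral_mono_set hf.integrableOn_Ioc
          ((ae_restrict_iff' measurableSet_Ioc).2 (ae_of_all _ hf0))
          (Ioc_subset_Ioc_left hs).eventuallyLE

lemma OU_neg_of_lt_sub {r x s t : ℝ} (hr : 0 ≤ r) (hg : Monotone g)
    (hg_rc : ∀ u, ContinuousWithinAt g (Ici u) u) (hs : 0 ≤ s) (hst : s ≤ t)
    (hjump : x * Real.exp (r * t) < g t - g s) :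
    OU r x g t < 0 := by
  have hdisc := mul_sub_le_lsInt hg hg_rc (f := fun u => Real.exp (-(r * u)))
    (m := Real.exp (-(r * t))) (by fun_prop) hs hst (fun u _ => (Real.exp_pos _).le)
    fun u hu => Real.exp_le_exp.2 (by nlinarith [hu.2])
  have hx : x < Real.exp (-(r * t)) * (g t - g s) := by
    rwa [Real.exp_neg, inv_mul_eq_div, lt_div_iff₀ (Real.exp_pos _)]
  exact mul_neg_of_pos_of_neg (Real.exp_pos _) (by linarith)

lemma ruinTime_lt_top_of_OU_neg {r x t : ℝ} (ht : 0 < t) (hruin : OU r x g t < 0) :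
    ruinTime r x g < ⊤ :=
  (biInf_le (fun s => ENNReal.ofReal s)
    (show t ∈ {s | 0 < s ∧ OU r x g s < 0} from ⟨ht, hruin⟩)).trans_lt ENNReal.ofReal_lt_top

end Ruin

lemma iIndepFun_unit_increments {Ω : Type*} [MeasurableSpace Ω] {μ : Measure Ω}
    {Z : ℝ → Ω → ℝ}
    (hindep : ∀ n : ℕ, ∀ t : Fin (n + 1) → ℝ, Monotone t → (∀ i, 0 ≤ t i) →
      iIndepFun (fun i : Fin n => fun ω => Z (t i.succ) ω - Z (t i.castSucc) ω) μ) :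
    iIndepFun (fun n : ℕ => fun ω => Z (n + 1) ω - Z n ω) μ := by
  rw [iIndepFun_iff_finset]
  intro S
  set m := S.sup id + 1
  have hlt : ∀ n ∈ S, n < m := fun n hn => Nat.lt_succ_of_le (S.le_sup (f := id) hn)
  have hfin : iIndepFun (fun i : Fin m => fun ω => Z ((i : ℕ) + 1) ω - Z (i : ℕ) ω) μ := by
    have := hindep m (fun i => (i : ℕ)) (fun i j hij => Nat.cast_le.2 hij)
      fun i => Nat.cast_nonneg _
    simpa only [Fin.val_succ, Fin.val_castSucc, Nat.cast_add, Nat.cast_one] using this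
  have hinj : Function.Injective fun n : S => (⟨n, hlt n n.2⟩ : Fin m) :=
    fun a b hab => Subtype.ext (Fin.mk.inj_iff.1 hab)
  exact hfin.precomp (g := fun n : S => (⟨n, hlt n n.2⟩ : Fin m)) hinj

lemma measure_unit_increment_preimage {Ω : Type*} [MeasurableSpace Ω] {μ : Measure Ω}
    {Z : ℝ → Ω → ℝ} (hZmeas : ∀ t, Measurable (Z t))
    (hstat : ∀ s t : ℝ, 0 ≤ s → s ≤ t →
      Measure.map (fun ω => Z t ω - Z s ω) μ = Measure.map (Z (t - s)) μ)
    (n : ℕ) {S : Set ℝ} (hS : MeasurableSet S) :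
    μ ((fun ω => Z (n + 1) ω - Z n ω) ⁻¹' S) = μ (Z 1 ⁻¹' S) := by
  have hmap := hstat n (n + 1) n.cast_nonneg (by linarith)
  rw [add_sub_cancel_left] at hmap
  have hD : Measurable fun ω => Z (n + 1) ω - Z n ω := (hZmeas _).sub (hZmeas _)
  rw [← Measure.map_apply hD hS, hmap, Measure.map_apply (hZmeas 1) hS]

/-- if `∫_1^∞ log y ν(dy) = ∞`, then absolute ruin is certain:
`P(τ₀ < ∞ | X_0 = x) = 1` for every `x > 0`. -/
theorem stmt_4
    {Ω : Type} [MeasurableSpace Ω] (μ : Measure Ω) [IsProbabilityMeasure μ]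
    (Z : ℝ → Ω → ℝ) (ν : Measure ℝ) (φ : ℝ → ℝ) (r : ℝ) (hr : 0 < r)
    (hZmeas : ∀ t, Measurable (Z t))
    (hZ0 : ∀ ω, ∀ s ≤ (0 : ℝ), Z s ω = 0)
    (hpath : ∀ᵐ ω ∂μ, Monotone (fun s => Z s ω) ∧
      ∀ x, ContinuousWithinAt (fun s => Z s ω) (Set.Ici x) x)
    (hν : ∫⁻ y in Set.Ioi (0 : ℝ), ENNReal.ofReal (min 1 y) ∂ν < ⊤)
    (hφ : ∀ β ≥ (0 : ℝ), φ β = ∫ y in Set.Ioi (0 : ℝ), (1 - Real.exp (-(β * y))) ∂ν)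
    (hLaplace : ∀ β ≥ (0 : ℝ), ∀ t ≥ (0 : ℝ),
      ∫ ω, Real.exp (-(β * Z t ω)) ∂μ = Real.exp (-(t * φ β)))
    (hindep : ∀ n : ℕ, ∀ t : Fin (n + 1) → ℝ, Monotone t → (∀ i, 0 ≤ t i) →
      iIndepFun
        (fun i : Fin n => fun ω => Z (t i.succ) ω - Z (t i.castSucc) ω) μ)
    (hstat : ∀ s t : ℝ, 0 ≤ s → s ≤ t →
      Measure.map (fun ω => Z t ω - Z s ω) μ = Measure.map (Z (t - s)) μ)
    (hlog : (∫⁻ y in Set.Ioi (1 : ℝ), ENNReal.ofReal (Real.log y) ∂ν) = ⊤)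
    (x : ℝ) (hx : 0 < x) :
    μ {ω | ruinTime r x (fun s => Z s ω) < ⊤} = 1 := by
  set D : ℕ → Ω → ℝ := fun n ω => Z (n + 1) ω - Z n ω
  set A : ℕ → Set Ω := fun n => D n ⁻¹' Ioi (x * Real.exp r * Real.exp r ^ n)
  have hD_meas : ∀ n, Measurable (D n) := fun n => (hZmeas _).sub (hZmeas _)
  have hA_meas : ∀ n, MeasurableSet (A n) := fun n => hD_meas n measurableSet_Ioi
  have hA_indep : iIndepSet A μ := (iIndepSet_iff_meas_biInter hA_meas).2 fun S =>
    (iIndepFun_unit_increments hindep).measure_inter_preimage_eq_mul S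
      fun _ _ => measurableSet_Ioi
  have hZ1 : 0 ≤ᵐ[μ] Z 1 := by
    filter_upwards [hpath] with ω hω
    simpa [hZ0 ω 0 le_rfl] using hω.1 zero_le_one
  have hA_sum : ∑' n, μ (A n) = ⊤ := by
    simp_rw [A, D, measure_unit_increment_preimage hZmeas hstat _ measurableSet_Ioi]
    refine tsum_measure_mul_pow_lt_eq_top hν hlog (hZmeas 1) hZ1 (fun β hβ => ?_)
      (by positivity) (Real.one_le_exp hr.le)
    rw [hLaplace β hβ 1 zero_le_one, one_mul, hφ β hβ]
  have hruin : ∀ᵐ ω ∂μ, ω ∈ limsup A atTop → ruinTime r x (fun s => Z s ω) < ⊤ := by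
    filter_upwards [hpath] with ω ⟨hmono, hrc⟩ hω
    obtain ⟨n, hn⟩ := (mem_limsup_iff_frequently_mem.1 hω).exists
    refine ruinTime_lt_top_of_OU_neg (t := n + 1) (by positivity) <|
      OU_neg_of_lt_sub hr.le hmono hrc n.cast_nonneg (by linarith) ?_
    rwa [mul_add_one, Real.exp_add, mul_comm r, Real.exp_nat_mul, ← mul_assoc, mul_right_comm]
  refine le_antisymm prob_le_one ?_
  rw [← measure_limsup_eq_one hA_meas hA_indep hA_sum]
  exact measure_mono_ae hruin
end

section
/- (Duality of semigroups.) For every t ≥ 0 and all nonnegative measurable functions f, g : ℝ → [0,∞], ∫_ℝ E[ f( e^{rt}(x − ∫_0^t e^{−rs} dZ_s) ) ] g(x) dx = e^{−rt} ∫_ℝ f(x) E[ g( e^{−rt}(x + ∫_0^t e^{rs} dZ_s) ) ] dx. -/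
open MeasureTheory ProbabilityTheory Filter
open scoped ENNReal

/-!
Reversing time on `[0, t]` permutes the increments of `Z` over a uniform grid, and since these
are i.i.d. their joint law is unchanged. Applied to Riemann–Stieltjes sums, and passing to the
almost sure limit, this shows that `∫_0^t e^{-rs} dZ_s` and `∫_0^t e^{-r(t-s)} dZ_s`, which is
`e^{-rt} ∫_0^t e^{rs} dZ_s`, have the same law. The duality then follows from Tonelli's theorem and
the substitution `y = e^{rt} (x - a)` for each fixed value `a` of the first integral.
-/

open Set Topology

noncomputable def gridPt (t : ℝ) (N k : ℕ) : ℝ := k * t / N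

section Grid

variable {t : ℝ} {N : ℕ}

@[simp] lemma gridPt_zero : gridPt t N 0 = 0 := by simp [gridPt]

lemma gridPt_self (hN : N ≠ 0) : gridPt t N N = t := by
  simp [gridPt, hN]

lemma gridPt_nonneg (ht : 0 ≤ t) (k : ℕ) : 0 ≤ gridPt t N k := by
  unfold gridPt; positivity

lemma gridPt_mono (ht : 0 ≤ t) : Monotone (gridPt t N) := fun i j hij => by
  unfold gridPt; gcongr

lemma gridPt_succ_sub (k : ℕ) : gridPt t N (k + 1) - gridPt t N k = t / N := by
  simp only [gridPt]; push_cast; ring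

lemma gridPt_sub_rev (hN : N ≠ 0) {k : ℕ} (hk : k ≤ N) :
    gridPt t N (N - k) = t - gridPt t N k := by
  simp only [gridPt, Nat.cast_sub hk]; field_simp

end Grid

section RiemannSums

variable (σ : Measure ℝ) [IsLocallyFiniteMeasure σ] {c : ℝ → ℝ}

lemma setIntegral_Ioc_eq_sum_grid (hc : Continuous c) {t : ℝ} (ht : 0 ≤ t) {N : ℕ}
    (hN : N ≠ 0) :
    ∫ x in Ioc 0 t, c x ∂σ =
      ∑ k ∈ Finset.range N, ∫ x in Ioc (gridPt t N k) (gridPt t N (k + 1)), c x ∂σ := by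
  have h := intervalIntegral.sum_integral_adjacent_intervals (μ := σ) (a := gridPt t N)
    (n := N) fun k _ => hc.intervalIntegrable _ _
  rw [gridPt_zero, gridPt_self hN, intervalIntegral.integral_of_le ht] at h
  rw [← h]
  exact Finset.sum_congr rfl fun k _ =>
    intervalIntegral.integral_of_le (gridPt_mono ht k.le_succ)

lemma abs_setIntegral_Ioc_sub_le (hc : Continuous c) {a b e δ : ℝ}
    (hbd : ∀ x ∈ Ioc a b, |c x - e| ≤ δ) :
    |∫ x in Ioc a b, c x ∂σ - e * σ.real (Ioc a b)| ≤ δ * σ.real (Ioc a b) := by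
  have hfin : σ (Ioc a b) < ⊤ :=
    (measure_mono Ioc_subset_Icc_self).trans_lt isCompact_Icc.measure_lt_top
  have : IsFiniteMeasure (σ.restrict (Ioc a b)) := isFiniteMeasure_restrict.2 hfin.ne
  have hint : IntegrableOn c (Ioc a b) σ :=
    (hc.integrableOn_Icc).mono_set Ioc_subset_Icc_self
  rw [mul_comm e, ← smul_eq_mul, ← setIntegral_const, ← integral_sub hint (integrable_const e)]
  exact norm_setIntegral_le_of_norm_le_const (f := fun x => c x - e) hfin hbd

lemma tendsto_sum_grid_setIntegral_Ioc (hc : Continuous c) {t : ℝ} (ht : 0 ≤ t)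
    (s : ℕ → ℕ → ℝ) (hs : ∀ N k, k < N → s N k ∈ Icc (gridPt t N k) (gridPt t N (k + 1))) :
    Tendsto (fun N => ∑ k ∈ Finset.range N,
        c (s N k) * σ.real (Ioc (gridPt t N k) (gridPt t N (k + 1))))
      atTop (𝓝 (∫ x in Ioc 0 t, c x ∂σ)) := by
  rw [Metric.tendsto_atTop]
  intro ε hε
  set M := σ.real (Ioc 0 t)
  have hM : 0 ≤ M := measureReal_nonneg
  obtain ⟨δ, hδ, hunif⟩ := Metric.uniformContinuousOn_iff.1
    ((isCompact_Icc (a := 0) (b := t)).uniformContinuousOn_of_continuous hc.continuousOn)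
    (ε / (M + 1)) (by positivity)
  obtain ⟨N₀, hN₀⟩ := exists_nat_gt (t / δ)
  refine ⟨N₀ + 1, fun N hN => ?_⟩
  have hN0 : N ≠ 0 := by omega
  have hmesh : t / N < δ := by
    rw [div_lt_iff₀ (by positivity)]
    rw [div_lt_iff₀ hδ] at hN₀
    have : (N₀ : ℝ) + 1 ≤ N := by exact_mod_cast hN
    nlinarith
  have hcell : ∀ k ∈ Finset.range N, ∀ x ∈ Ioc (gridPt t N k) (gridPt t N (k + 1)),
      |c x - c (s N k)| ≤ ε / (M + 1) := by
    intro k hk x hx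
    have hk := Finset.mem_range.1 hk
    have hsk := hs N k hk
    have hright : gridPt t N (k + 1) ≤ t := (gridPt_mono ht hk).trans_eq (gridPt_self hN0)
    have hleft := gridPt_nonneg (N := N) ht k
    have hwidth := gridPt_succ_sub (t := t) (N := N) k
    refine (hunif x ⟨by linarith [hx.1], by linarith [hx.2]⟩ (s N k)
      ⟨by linarith [hsk.1], by linarith [hsk.2]⟩ ?_).le
    rw [Real.dist_eq, abs_lt]
    constructor <;> linarith [hx.1, hx.2, hsk.1, hsk.2]
  have hmass : ∑ k ∈ Finset.range N, σ.real (Ioc (gridPt t N k) (gridPt t N (k + 1))) = M := by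
    simpa using (setIntegral_Ioc_eq_sum_grid σ (c := fun _ => (1 : ℝ)) continuous_const ht hN0).symm
  rw [dist_comm, Real.dist_eq, setIntegral_Ioc_eq_sum_grid σ hc ht hN0, ← Finset.sum_sub_distrib]
  calc _ ≤ ∑ k ∈ Finset.range N,
        ε / (M + 1) * σ.real (Ioc (gridPt t N k) (gridPt t N (k + 1))) :=
        (Finset.abs_sum_le_sum_abs _ _).trans <| Finset.sum_le_sum fun k hk =>
          abs_setIntegral_Ioc_sub_le σ hc (hcell k hk)
    _ = ε * (M / (M + 1)) := by rw [← Finset.mul_sum, hmass]; ring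
    _ < ε := mul_lt_of_lt_one_right hε ((div_lt_one (by positivity)).2 (by linarith))

end RiemannSums

section Stieltjes

variable {w : ℝ → ℝ}

instance (w : ℝ → ℝ) : IsLocallyFiniteMeasure (stMeasure w) := by
  unfold stMeasure; split_ifs <;> infer_instance

lemma stMeasure_eq_s9 (hm : Monotone w) (hc : ∀ x, ContinuousWithinAt w (Ici x) x) :
    stMeasure w = StieltjesFunction.measure ⟨w, hm, hc⟩ :=
  dif_pos ⟨hm, hc⟩

lemma stMeasure_real_Ioc (hm : Monotone w) (hc : ∀ x, ContinuousWithinAt w (Ici x) x)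
    {a b : ℝ} (hab : a ≤ b) : (stMeasure w).real (Ioc a b) = w b - w a := by
  rw [measureReal_def, stMeasure_eq_s9 hm hc, StieltjesFunction.measure_Ioc,
    ENNReal.toReal_ofReal (sub_nonneg.2 (hm hab))]

lemma tendsto_riemannSum_lsInt (hm : Monotone w) (hc : ∀ x, ContinuousWithinAt w (Ici x) x)
    {c : ℝ → ℝ} (hcont : Continuous c) {t : ℝ} (ht : 0 ≤ t)
    (s : ℕ → ℕ → ℝ) (hs : ∀ N k, k < N → s N k ∈ Icc (gridPt t N k) (gridPt t N (k + 1))) :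
    Tendsto (fun N => ∑ k ∈ Finset.range N,
        c (s N k) * (w (gridPt t N (k + 1)) - w (gridPt t N k)))
      atTop (𝓝 (lsInt w c t)) := by
  refine (tendsto_sum_grid_setIntegral_Ioc (stMeasure w) hcont ht s hs).congr fun N =>
    Finset.sum_congr rfl fun k _ => ?_
  rw [stMeasure_real_Ioc hm hc (gridPt_mono ht k.le_succ)]

end Stieltjes

section TimeReversal

variable {Ω : Type*} [MeasurableSpace Ω] {μ : Measure Ω}

noncomputable def gridIncrements (Z : ℝ → Ω → ℝ) (t : ℝ) (N : ℕ) (ω : Ω) : Fin N → ℝ :=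
  fun k => Z (gridPt t N (k + 1)) ω - Z (gridPt t N k) ω

lemma measurable_gridIncrements {Z : ℝ → Ω → ℝ} (hZmeas : ∀ t, Measurable (Z t)) (t : ℝ)
    (N : ℕ) : Measurable (gridIncrements Z t N) :=
  measurable_pi_lambda _ fun _ => (hZmeas _).sub (hZmeas _)

lemma map_gridIncrements_eq_pi [IsProbabilityMeasure μ] {Z : ℝ → Ω → ℝ}
    (hZmeas : ∀ t, Measurable (Z t))
    (hindep : ∀ n : ℕ, ∀ t : Fin (n + 1) → ℝ, Monotone t → (∀ i, 0 ≤ t i) →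
      iIndepFun (m := fun _ => (inferInstance : MeasurableSpace ℝ))
        (fun i : Fin n => fun ω => Z (t i.succ) ω - Z (t i.castSucc) ω) μ)
    (hstat : ∀ s t : ℝ, 0 ≤ s → s ≤ t →
      Measure.map (fun ω => Z t ω - Z s ω) μ = Measure.map (Z (t - s)) μ)
    {t : ℝ} (ht : 0 ≤ t) (N : ℕ) :
    μ.map (gridIncrements Z t N) = Measure.pi fun _ => μ.map (Z (t / N)) := by
  have hind := hindep N (fun j => gridPt t N j) (fun i j hij => gridPt_mono ht hij)
    (fun j => gridPt_nonneg ht j)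
  simp only [Fin.val_succ, Fin.val_castSucc] at hind
  calc μ.map (gridIncrements Z t N)
      = Measure.pi fun k : Fin N =>
          μ.map fun ω => Z (gridPt t N (k + 1)) ω - Z (gridPt t N k) ω :=
        (iIndepFun_iff_map_fun_eq_pi_map fun _ => ((hZmeas _).sub (hZmeas _)).aemeasurable).1 hind
    _ = Measure.pi fun _ => μ.map (Z (t / N)) := by
        congr 1; funext k
        rw [hstat _ _ (gridPt_nonneg ht k) (gridPt_mono ht (Nat.le_succ _)),
          gridPt_succ_sub]

lemma identDistrib_comp_perm_of_map_eq_pi {ι β : Type*} [Fintype ι] [MeasurableSpace β]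
    {X : Ω → ι → β} (hX : Measurable X) {ρ : Measure β} [SigmaFinite ρ]
    (h : μ.map X = Measure.pi fun _ => ρ) (e : Equiv.Perm ι) :
    IdentDistrib X (fun ω => X ω ∘ e) μ μ := by
  let E := MeasurableEquiv.arrowCongr' e.symm (MeasurableEquiv.refl β)
  have hE : MeasurePreserving E (Measure.pi fun _ => ρ) (Measure.pi fun _ => ρ) :=
    measurePreserving_arrowCongr' _ _ _ _ fun _ => MeasurePreserving.id _
  refine ⟨hX.aemeasurable, (E.measurable.comp hX).aemeasurable, ?_⟩
  change _ = μ.map (E ∘ X)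
  rw [← Measure.map_map E.measurable hX, h, hE.map_eq]

lemma identDistrib_riemannSum_reverse {Z : ℝ → Ω → ℝ} {t : ℝ} {N : ℕ} (c : ℝ → ℝ)
    (hrev : IdentDistrib (gridIncrements Z t N)
      (fun ω => gridIncrements Z t N ω ∘ Fin.revPerm) μ μ) :
    IdentDistrib
      (fun ω => ∑ k ∈ Finset.range N,
        c (gridPt t N k) * (Z (gridPt t N (k + 1)) ω - Z (gridPt t N k) ω))
      (fun ω => ∑ k ∈ Finset.range N,
        c (t - gridPt t N (k + 1)) * (Z (gridPt t N (k + 1)) ω - Z (gridPt t N k) ω)) μ μ := by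
  let G : (Fin N → ℝ) → ℝ := fun x => ∑ k : Fin N, c (gridPt t N k) * x k
  have hG : Measurable G := Finset.measurable_sum _ fun k _ => (measurable_pi_apply k).const_mul _
  convert hrev.comp hG using 1 <;> funext ω <;>
    rw [Function.comp_apply, ← Fin.sum_univ_eq_sum_range
      (fun k => _ * (Z (gridPt t N (k + 1)) ω - Z (gridPt t N k) ω))]
  · rfl
  -- reversing the cells turns the left tag `gridPt t N (N - 1 - k)` into `t - gridPt t N (k + 1)`
  · refine Fintype.sum_equiv Fin.revPerm _ _ fun k => ?_
    have hk : (k : ℕ) + 1 ≤ N := k.is_lt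
    simp only [gridIncrements, Function.comp_apply, Fin.revPerm_apply, Fin.rev_rev, Fin.val_rev,
      gridPt_sub_rev (t := t) (by omega : N ≠ 0) hk]

end TimeReversal

lemma identDistrib_of_ae_tendsto {Ω Ω' E : Type*} [MeasurableSpace Ω] [MeasurableSpace Ω']
    {μ : Measure Ω} {μ' : Measure Ω'} [IsProbabilityMeasure μ] [IsProbabilityMeasure μ']
    [TopologicalSpace E] [TopologicalSpace.PseudoMetrizableSpace E] [HasOuterApproxClosed E]
    [MeasurableSpace E] [BorelSpace E] {X : ℕ → Ω → E} {Y : ℕ → Ω' → E} {A : Ω → E} {B : Ω' → E}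
    (hXY : ∀ n, IdentDistrib (X n) (Y n) μ μ')
    (hXA : ∀ᵐ ω ∂μ, Tendsto (fun n => X n ω) atTop (𝓝 (A ω)))
    (hYB : ∀ᵐ ω ∂μ', Tendsto (fun n => Y n ω) atTop (𝓝 (B ω))) :
    IdentDistrib A B μ μ' := by
  have hX n := (hXY n).aemeasurable_fst
  have hY n := (hXY n).aemeasurable_snd
  have hA := aemeasurable_of_tendsto_metrizable_ae' hX hXA
  have hB := aemeasurable_of_tendsto_metrizable_ae' hY hYB
  have hYlim := tendstoInDistribution_of_ae_tendsto hY hB hYB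
  have hXlim' : TendstoInDistribution X atTop B (fun _ => μ) μ' :=
    { forall_aemeasurable := hX
      aemeasurable_limit := hB
      tendsto := hYlim.tendsto.congr fun n => Subtype.ext (hXY n).map_eq.symm }
  exact ⟨hA, hB, tendstoInDistribution_unique X
    (tendstoInDistribution_of_ae_tendsto hX hA hXA) hXlim'⟩

lemma identDistrib_lsInt_reverse {Ω : Type*} [MeasurableSpace Ω] {μ : Measure Ω}
    [IsProbabilityMeasure μ] {Z : ℝ → Ω → ℝ} (hZmeas : ∀ t, Measurable (Z t))
    (hpath : ∀ᵐ ω ∂μ, Monotone (fun s => Z s ω) ∧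
      ∀ x, ContinuousWithinAt (fun s => Z s ω) (Set.Ici x) x)
    (hindep : ∀ n : ℕ, ∀ t : Fin (n + 1) → ℝ, Monotone t → (∀ i, 0 ≤ t i) →
      iIndepFun (m := fun _ => (inferInstance : MeasurableSpace ℝ))
        (fun i : Fin n => fun ω => Z (t i.succ) ω - Z (t i.castSucc) ω) μ)
    (hstat : ∀ s t : ℝ, 0 ≤ s → s ≤ t →
      Measure.map (fun ω => Z t ω - Z s ω) μ = Measure.map (Z (t - s)) μ)
    {c : ℝ → ℝ} (hc : Continuous c) {t : ℝ} (ht : 0 ≤ t) :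
    IdentDistrib (fun ω => lsInt (fun s => Z s ω) c t)
      (fun ω => lsInt (fun s => Z s ω) (fun s => c (t - s)) t) μ μ := by
  refine identDistrib_of_ae_tendsto (fun N => identDistrib_riemannSum_reverse c
    (identDistrib_comp_perm_of_map_eq_pi (measurable_gridIncrements hZmeas t N)
      (map_gridIncrements_eq_pi hZmeas hindep hstat ht N) Fin.revPerm)) ?_ ?_
  all_goals filter_upwards [hpath] with ω ⟨hmono, hright⟩
  · exact tendsto_riemannSum_lsInt hmono hright hc ht (fun N k => gridPt t N k)
      fun N k _ => ⟨le_rfl, gridPt_mono ht k.le_succ⟩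
  · exact tendsto_riemannSum_lsInt hmono hright (hc.comp (continuous_sub_left t)) ht
      (fun N k => gridPt t N (k + 1)) fun N k _ => ⟨gridPt_mono ht k.le_succ, le_rfl⟩

lemma lintegral_comp_mul_left_real {F : ℝ → ℝ≥0∞} (hF : Measurable F) {E : ℝ} (hE : E ≠ 0) :
    ∫⁻ x, F (E * x) = ENNReal.ofReal |E⁻¹| * ∫⁻ y, F y := by
  rw [← lintegral_map hF (measurable_const_mul E), Real.map_volume_mul_left hE,
    lintegral_smul_measure, smul_eq_mul]

lemma lintegral_comp_mul_sub_mul {f g : ℝ → ℝ≥0∞} (hf : Measurable f) (hg : Measurable g)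
    {E : ℝ} (hE : 0 < E) (a : ℝ) :
    ∫⁻ x, f (E * (x - a)) * g x = ENNReal.ofReal E⁻¹ * ∫⁻ y, f y * g (E⁻¹ * y + a) := by
  have hF : Measurable fun y => f y * g (E⁻¹ * y + a) := by fun_prop
  calc ∫⁻ x, f (E * (x - a)) * g x
      = ∫⁻ x, f (E * (x - a)) * g (E⁻¹ * (E * (x - a)) + a) := by
        congr 1; funext x; field_simp; ring_nf
    _ = ∫⁻ x, f (E * x) * g (E⁻¹ * (E * x) + a) :=
        lintegral_sub_right_eq_self (fun x => f (E * x) * g (E⁻¹ * (E * x) + a)) a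
    _ = _ := by rw [lintegral_comp_mul_left_real hF hE.ne', abs_of_pos (inv_pos.2 hE)]

lemma lintegral_lintegral_comp_mul_sub_mul {Ω : Type*} [MeasurableSpace Ω] {μ : Measure Ω}
    [SFinite μ] {A : Ω → ℝ} (hA : AEMeasurable A μ) {f g : ℝ → ℝ≥0∞} (hf : Measurable f)
    (hg : Measurable g) {E : ℝ} (hE : 0 < E) :
    ∫⁻ x, (∫⁻ ω, f (E * (x - A ω)) ∂μ) * g x =
      ENNReal.ofReal E⁻¹ * ∫⁻ y, f y * ∫⁻ ω, g (E⁻¹ * y + A ω) ∂μ := by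
  set ρ := μ.map A
  have hρ (F : ℝ → ℝ≥0∞) (hF : Measurable F) : ∫⁻ ω, F (A ω) ∂μ = ∫⁻ a, F a ∂ρ :=
    (lintegral_map' hF.aemeasurable hA).symm
  calc ∫⁻ x, (∫⁻ ω, f (E * (x - A ω)) ∂μ) * g x
      = ∫⁻ x, ∫⁻ a, f (E * (x - a)) * g x ∂ρ := lintegral_congr fun x => by
        rw [hρ (fun a => f (E * (x - a))) (by fun_prop), lintegral_mul_const _ (by fun_prop)]
    _ = ∫⁻ a, ∫⁻ x, f (E * (x - a)) * g x ∂volume ∂ρ := lintegral_lintegral_swap (by fun_prop)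
    _ = ∫⁻ a, ENNReal.ofReal E⁻¹ * ∫⁻ y, f y * g (E⁻¹ * y + a) ∂volume ∂ρ :=
        lintegral_congr fun a => lintegral_comp_mul_sub_mul hf hg hE a
    _ = ENNReal.ofReal E⁻¹ * ∫⁻ y, ∫⁻ a, f y * g (E⁻¹ * y + a) ∂ρ := by
        rw [lintegral_const_mul' _ _ ENNReal.ofReal_ne_top, lintegral_lintegral_swap (by fun_prop)]
    _ = ENNReal.ofReal E⁻¹ * ∫⁻ y, f y * ∫⁻ ω, g (E⁻¹ * y + A ω) ∂μ := by
        congr 1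
        exact lintegral_congr fun y => by
          rw [hρ (fun a => g (E⁻¹ * y + a)) (by fun_prop), lintegral_const_mul _ (by fun_prop)]

theorem stmt_9_general
    {Ω : Type} [MeasurableSpace Ω] (μ : Measure Ω) [IsProbabilityMeasure μ]
    (Z : ℝ → Ω → ℝ) (r : ℝ)
    (hZmeas : ∀ t, Measurable (Z t))
    (hpath : ∀ᵐ ω ∂μ, Monotone (fun s => Z s ω) ∧
      ∀ x, ContinuousWithinAt (fun s => Z s ω) (Set.Ici x) x)
    (hindep : ∀ n : ℕ, ∀ t : Fin (n + 1) → ℝ, Monotone t → (∀ i, 0 ≤ t i) →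
      iIndepFun (m := fun _ => (inferInstance : MeasurableSpace ℝ))
        (fun i : Fin n => fun ω => Z (t i.succ) ω - Z (t i.castSucc) ω) μ)
    (hstat : ∀ s t : ℝ, 0 ≤ s → s ≤ t →
      Measure.map (fun ω => Z t ω - Z s ω) μ = Measure.map (Z (t - s)) μ)
    (f g : ℝ → ℝ≥0∞) (hf : Measurable f) (hg : Measurable g)
    (t : ℝ) (ht : 0 ≤ t) :
    ∫⁻ x : ℝ, (∫⁻ ω, f (Real.exp (r * t) *
        (x - lsInt (fun s => Z s ω) (fun s => Real.exp (-(r * s))) t)) ∂μ) * g x =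
      ENNReal.ofReal (Real.exp (-(r * t))) *
        ∫⁻ x : ℝ, f x * ∫⁻ ω, g (Real.exp (-(r * t)) *
          (x + lsInt (fun s => Z s ω) (fun s => Real.exp (r * s)) t)) ∂μ := by
  have hrev := identDistrib_lsInt_reverse hZmeas hpath hindep hstat
    (c := fun s => Real.exp (-(r * s))) (by fun_prop) ht
  have hreversed (ω : Ω) :
      lsInt (fun s => Z s ω) (fun s => Real.exp (-(r * (t - s)))) t =
        Real.exp (-(r * t)) * lsInt (fun s => Z s ω) (fun s => Real.exp (r * s)) t := by
    rw [lsInt, lsInt, ← integral_const_mul]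
    simp_rw [← Real.exp_add]
    ring_nf
  rw [lintegral_lintegral_comp_mul_sub_mul hrev.aemeasurable_fst hf hg (Real.exp_pos _),
    ← Real.exp_neg]
  congr 1
  refine lintegral_congr fun x => ?_
  simp_rw [mul_add, ← hreversed]
  congr 1
  exact (hrev.comp (hg.comp (measurable_const_add _))).lintegral_eq

/-- duality of semigroups. For every `t ≥ 0` and nonnegative measurable
`f, g`, `∫ E[f(e^{rt}(x - ∫_0^t e^{-rs} dZ_s))] g(x) dx
  = e^{-rt} ∫ f(x) E[g(e^{-rt}(x + ∫_0^t e^{rs} dZ_s))] dx`. -/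
theorem stmt_9
    {Ω : Type} [MeasurableSpace Ω] (μ : Measure Ω) [IsProbabilityMeasure μ]
    (Z : ℝ → Ω → ℝ) (ν : Measure ℝ) (φ : ℝ → ℝ) (r : ℝ) (hr : 0 < r)
    (hZmeas : ∀ t, Measurable (Z t))
    (hZ0 : ∀ ω, ∀ s ≤ (0 : ℝ), Z s ω = 0)
    (hpath : ∀ᵐ ω ∂μ, Monotone (fun s => Z s ω) ∧
      ∀ x, ContinuousWithinAt (fun s => Z s ω) (Set.Ici x) x)
    (hν : ∫⁻ y in Set.Ioi (0 : ℝ), ENNReal.ofReal (min 1 y) ∂ν < ⊤)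
    (hφ : ∀ β ≥ (0 : ℝ), φ β = ∫ y in Set.Ioi (0 : ℝ), (1 - Real.exp (-(β * y))) ∂ν)
    (hLaplace : ∀ β ≥ (0 : ℝ), ∀ t ≥ (0 : ℝ),
      ∫ ω, Real.exp (-(β * Z t ω)) ∂μ = Real.exp (-(t * φ β)))
    (hindep : ∀ n : ℕ, ∀ t : Fin (n + 1) → ℝ, Monotone t → (∀ i, 0 ≤ t i) →
      iIndepFun (m := fun _ => (inferInstance : MeasurableSpace ℝ))
        (fun i : Fin n => fun ω => Z (t i.succ) ω - Z (t i.castSucc) ω) μ)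
    (hstat : ∀ s t : ℝ, 0 ≤ s → s ≤ t →
      Measure.map (fun ω => Z t ω - Z s ω) μ = Measure.map (Z (t - s)) μ)
    (f g : ℝ → ℝ≥0∞) (hf : Measurable f) (hg : Measurable g)
    (t : ℝ) (ht : 0 ≤ t) :
    ∫⁻ x : ℝ, (∫⁻ ω, f (Real.exp (r * t) *
        (x - lsInt (fun s => Z s ω) (fun s => Real.exp (-(r * s))) t)) ∂μ) * g x =
      ENNReal.ofReal (Real.exp (-(r * t))) *
        ∫⁻ x : ℝ, f x * ∫⁻ ω, g (Real.exp (-(r * t)) *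
          (x + lsInt (fun s => Z s ω) (fun s => Real.exp (r * s)) t)) ∂μ :=
  stmt_9_general μ Z r hZmeas hpath hindep hstat f g hf hg t ht
end

section
/- (Log-moment dichotomy.) For every β > 0, the integral ∫_0^β φ(u)/u du is finite if and only if ∫_1^∞ log(y) ν(dy) < ∞. -/
/-!
By Tonelli, `∫₀^β φ(u)/u du = ∫ Ein(βy) ν(dy)` with `Ein(x) = ∫₀^x (1 - e⁻ᵗ)/t dt`.
The integrand `(1 - e⁻ᵗ)/t` is at most `min 1 (1/t)` and at least `(1 - e⁻¹)/t` for `t ≥ 1`,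
so `Ein(x) ≤ x`, and `(1 - e⁻¹) log x ≤ Ein(x) ≤ 1 + log x` for `x ≥ 1`.
Since `∫ (1 ∧ y) ν(dy) < ∞`, the part of `ν` near `0` contributes finitely (as `Ein(βy) ≤ βy`)
and `ν` has finite mass away from `0`; so finiteness is decided on a tail `y > M`,
where `Ein(βy)` and `log y` are comparable up to a factor and an additive constant.
-/

open MeasureTheory Set Real
open scoped ENNReal

noncomputable def oneSubExpNegDiv (u y : ℝ) : ℝ := (1 - exp (-(u * y))) / u

section Kernel

variable {u y : ℝ}

lemma oneSubExpNegDiv_nonneg (hu : 0 ≤ u) (hy : 0 ≤ y) : 0 ≤ oneSubExpNegDiv u y :=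
  div_nonneg (sub_nonneg.2 (exp_le_one_iff.2 (by nlinarith))) hu

lemma oneSubExpNegDiv_le (hu : 0 < u) : oneSubExpNegDiv u y ≤ y := by
  rw [oneSubExpNegDiv, div_le_iff₀ hu]
  linarith [add_one_le_exp (-(u * y))]

lemma oneSubExpNegDiv_le_inv (hu : 0 < u) : oneSubExpNegDiv u y ≤ u⁻¹ := by
  rw [oneSubExpNegDiv, div_eq_mul_inv]
  exact mul_le_of_le_one_left (inv_pos.2 hu).le (by linarith [exp_pos (-(u * y))])

lemma oneSubExpNegDiv_le_max_mul_min (hu : 0 < u) (hy : 0 ≤ y) :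
    oneSubExpNegDiv u y ≤ max 1 u⁻¹ * min 1 y := by
  rcases le_total y 1 with h | h
  · rw [min_eq_right h]
    exact (oneSubExpNegDiv_le hu).trans (le_mul_of_one_le_left hy (le_max_left _ _))
  · rw [min_eq_left h, mul_one]
    exact (oneSubExpNegDiv_le_inv hu).trans (le_max_right _ _)

lemma mul_inv_le_oneSubExpNegDiv (hu : 0 < u) (h : 1 ≤ u * y) :
    (1 - exp (-1)) * u⁻¹ ≤ oneSubExpNegDiv u y := by
  rw [oneSubExpNegDiv, div_eq_mul_inv]
  gcongr

lemma measurable_oneSubExpNegDiv : Measurable (Function.uncurry oneSubExpNegDiv) := by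
  unfold oneSubExpNegDiv Function.uncurry
  fun_prop

end Kernel

lemma lintegral_Ioc_ofReal_inv {a b : ℝ} (ha : 0 < a) (hab : a ≤ b) :
    ∫⁻ u in Ioc a b, ENNReal.ofReal u⁻¹ = ENNReal.ofReal (log (b / a)) := by
  have hb : 0 < b := ha.trans_le hab
  have hcont : ContinuousOn (fun u : ℝ ↦ u⁻¹) (Icc a b) :=
    continuousOn_inv₀.mono fun u hu ↦ (ha.trans_le hu.1).ne'
  rw [← ofReal_integral_eq_lintegral_ofReal (hcont.integrableOn_Icc.mono_set Ioc_subset_Icc_self),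
    ← intervalIntegral.integral_of_le hab, integral_inv_of_pos ha hb]
  exact ae_restrict_of_forall_mem measurableSet_Ioc fun u hu ↦ inv_nonneg.2 (ha.trans hu.1).le

/-- `einLIntegral β y` is `Ein (β y) = ∫₀^{βy} (1 - e⁻ᵗ) / t dt`, after substituting `t = u y`. -/
noncomputable def einLIntegral (β y : ℝ) : ℝ≥0∞ :=
  ∫⁻ u in Ioc 0 β, ENNReal.ofReal (oneSubExpNegDiv u y)

section Ein

variable {β y : ℝ}

lemma einLIntegral_le_ofReal_mul (hy : 0 ≤ y) : einLIntegral β y ≤ ENNReal.ofReal (β * y) :=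
  calc einLIntegral β y ≤ ∫⁻ _ in Ioc 0 β, ENNReal.ofReal y :=
        setLIntegral_mono measurable_const fun u hu ↦
          ENNReal.ofReal_le_ofReal (oneSubExpNegDiv_le hu.1)
    _ = ENNReal.ofReal (β * y) := by
        rw [setLIntegral_const, Real.volume_Ioc, sub_zero, ← ENNReal.ofReal_mul hy, mul_comm]

lemma einLIntegral_eq_add (hy : 0 < y) (h : 1 ≤ β * y) :
    einLIntegral β y =
      einLIntegral y⁻¹ y + ∫⁻ u in Ioc y⁻¹ β, ENNReal.ofReal (oneSubExpNegDiv u y) := by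
  have hyβ : y⁻¹ ≤ β := (inv_le_iff_one_le_mul₀ hy).2 h
  rw [einLIntegral, einLIntegral, ← Ioc_union_Ioc_eq_Ioc (inv_pos.2 hy).le hyβ,
    lintegral_union measurableSet_Ioc (Ioc_disjoint_Ioc_of_le le_rfl)]

lemma einLIntegral_le_one_add_log (hy : 0 < y) (h : 1 ≤ β * y) :
    einLIntegral β y ≤ ENNReal.ofReal (1 + log (β * y)) := by
  have hyβ : y⁻¹ ≤ β := (inv_le_iff_one_le_mul₀ hy).2 h
  have hhead : einLIntegral y⁻¹ y ≤ 1 := by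
    simpa [inv_mul_cancel₀ hy.ne'] using einLIntegral_le_ofReal_mul (β := y⁻¹) hy.le
  have htail : ∫⁻ u in Ioc y⁻¹ β, ENNReal.ofReal (oneSubExpNegDiv u y)
      ≤ ENNReal.ofReal (log (β * y)) :=
    calc _ ≤ ∫⁻ u in Ioc y⁻¹ β, ENNReal.ofReal u⁻¹ :=
          setLIntegral_mono' measurableSet_Ioc fun u hu ↦
            ENNReal.ofReal_le_ofReal (oneSubExpNegDiv_le_inv ((inv_pos.2 hy).trans hu.1))
      _ = ENNReal.ofReal (log (β * y)) := by
          rw [lintegral_Ioc_ofReal_inv (inv_pos.2 hy) hyβ, div_inv_eq_mul]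
  rw [einLIntegral_eq_add hy h, ENNReal.ofReal_add zero_le_one (log_nonneg h), ENNReal.ofReal_one]
  exact add_le_add hhead htail

lemma ofReal_mul_log_le_einLIntegral (hy : 0 < y) (h : 1 ≤ β * y) :
    ENNReal.ofReal ((1 - exp (-1)) * log (β * y)) ≤ einLIntegral β y := by
  have hyβ : y⁻¹ ≤ β := (inv_le_iff_one_le_mul₀ hy).2 h
  have hc : 0 ≤ 1 - exp (-1) := sub_nonneg.2 (exp_le_one_iff.2 (by norm_num))
  calc ENNReal.ofReal ((1 - exp (-1)) * log (β * y))
      = ∫⁻ u in Ioc y⁻¹ β, ENNReal.ofReal ((1 - exp (-1)) * u⁻¹) := by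
        simp_rw [ENNReal.ofReal_mul hc]
        rw [lintegral_const_mul' _ _ ENNReal.ofReal_ne_top,
          lintegral_Ioc_ofReal_inv (inv_pos.2 hy) hyβ, div_inv_eq_mul]
    _ ≤ ∫⁻ u in Ioc y⁻¹ β, ENNReal.ofReal (oneSubExpNegDiv u y) :=
        setLIntegral_mono' measurableSet_Ioc fun u hu ↦ ENNReal.ofReal_le_ofReal <|
          mul_inv_le_oneSubExpNegDiv ((inv_pos.2 hy).trans hu.1)
            ((inv_le_iff_one_le_mul₀ hy).1 hu.1.le)
    _ ≤ einLIntegral β y := by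
        rw [einLIntegral_eq_add hy h]
        exact le_add_self

end Ein

section LIntegralFinite

variable {α : Type*} [MeasurableSpace α] {μ : Measure α} {f g : α → ℝ≥0∞} {s : Set α}

lemma setLIntegral_lt_top_of_le_const_mul (hs : MeasurableSet s) {c : ℝ≥0∞} (hc : c ≠ ∞)
    (hfg : ∀ x ∈ s, f x ≤ c * g x) (hg : ∫⁻ x in s, g x ∂μ < ∞) :
    ∫⁻ x in s, f x ∂μ < ∞ :=
  calc ∫⁻ x in s, f x ∂μ ≤ ∫⁻ x in s, c * g x ∂μ := setLIntegral_mono' hs hfg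
    _ = c * ∫⁻ x in s, g x ∂μ := lintegral_const_mul' c g hc
    _ < ∞ := ENNReal.mul_lt_top hc.lt_top hg

lemma setLIntegral_lt_top_of_le_add_const (hs : MeasurableSet s) (hμs : μ s < ∞) {C : ℝ≥0∞}
    (hC : C ≠ ∞) (hfg : ∀ x ∈ s, f x ≤ g x + C) (hg : ∫⁻ x in s, g x ∂μ < ∞) :
    ∫⁻ x in s, f x ∂μ < ∞ :=
  calc ∫⁻ x in s, f x ∂μ ≤ ∫⁻ x in s, g x + C ∂μ := setLIntegral_mono' hs hfg
    _ = ∫⁻ x in s, g x ∂μ + C * μ s := by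
        rw [lintegral_add_right _ measurable_const, setLIntegral_const]
    _ < ∞ := ENNReal.add_lt_top.2 ⟨hg, ENNReal.mul_lt_top hC.lt_top hμs⟩

lemma setLIntegral_Ioi_lt_top_iff_of_le {μ : Measure ℝ} {f : ℝ → ℝ≥0∞} {a b : ℝ} (hab : a ≤ b)
    (h : ∫⁻ x in Ioc a b, f x ∂μ < ∞) :
    ∫⁻ x in Ioi a, f x ∂μ < ∞ ↔ ∫⁻ x in Ioi b, f x ∂μ < ∞ := by
  rw [← Ioc_union_Ioi_eq_Ioi hab, lintegral_union measurableSet_Ioi Ioc_disjoint_Ioi_same,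
    ENNReal.add_lt_top, and_iff_right h]

end LIntegralFinite

lemma sigmaFinite_restrict_Ioi_of_measure_Ioi_lt_top {ν : Measure ℝ}
    (h : ∀ a, 0 < a → ν (Ioi a) < ∞) : SigmaFinite (ν.restrict (Ioi 0)) := by
  refine ⟨⟨⟨fun n ↦ Iic 0 ∪ Ioi ((n : ℝ) + 1)⁻¹, fun _ ↦ trivial, fun n ↦ ?_, ?_⟩⟩⟩
  · rw [Measure.restrict_apply' measurableSet_Ioi]
    refine (measure_mono fun x hx ↦ ?_).trans_lt (h ((n : ℝ) + 1)⁻¹ (by positivity))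
    rcases hx with ⟨hx | hx, hx0⟩
    · exact ((mem_Iic.1 hx).not_gt (mem_Ioi.1 hx0)).elim
    · exact hx
  · refine eq_univ_of_forall fun x ↦ mem_iUnion.2 ?_
    rcases le_or_gt x 0 with hx | hx
    · exact ⟨0, Or.inl hx⟩
    · obtain ⟨n, hn⟩ := exists_nat_one_div_lt hx
      exact ⟨n, Or.inr (by simpa [one_div] using hn)⟩

section LevyMeasure

variable {ν : Measure ℝ} (hν : ∫⁻ y in Ioi 0, ENNReal.ofReal (min 1 y) ∂ν < ∞)
include hν

lemma measure_Ioi_lt_top_of_lintegral_min {a : ℝ} (ha : 0 < a) : ν (Ioi a) < ∞ := by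
  have hmin : 0 < min 1 a := lt_min one_pos ha
  refine ENNReal.lt_top_of_mul_ne_top_right (a := ENNReal.ofReal (min 1 a)) ?_
    (by simpa using hmin)
  refine (lt_of_le_of_lt ?_ hν).ne
  calc ENNReal.ofReal (min 1 a) * ν (Ioi a)
      = ∫⁻ _ in Ioi a, ENNReal.ofReal (min 1 a) ∂ν := (setLIntegral_const _ _).symm
    _ ≤ ∫⁻ y in Ioi a, ENNReal.ofReal (min 1 y) ∂ν :=
        setLIntegral_mono' measurableSet_Ioi fun y hy ↦
          ENNReal.ofReal_le_ofReal (min_le_min le_rfl (le_of_lt hy))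
    _ ≤ ∫⁻ y in Ioi 0, ENNReal.ofReal (min 1 y) ∂ν := lintegral_mono_set (Ioi_subset_Ioi ha.le)

lemma integrable_oneSubExpNegDiv {u : ℝ} (hu : 0 < u) :
    Integrable (oneSubExpNegDiv u) (ν.restrict (Ioi 0)) := by
  have hmin_nonneg : 0 ≤ᵐ[ν.restrict (Ioi 0)] fun y ↦ min 1 y :=
    ae_restrict_of_forall_mem measurableSet_Ioi fun y hy ↦ le_min zero_le_one (le_of_lt hy)
  have hmin : Integrable (fun y ↦ min 1 y) (ν.restrict (Ioi 0)) :=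
    ⟨by fun_prop, (hasFiniteIntegral_iff_ofReal hmin_nonneg).2 hν⟩
  refine (hmin.const_mul (max 1 u⁻¹)).mono' ?_ ?_
  · exact (measurable_oneSubExpNegDiv.comp measurable_prodMk_left).aestronglyMeasurable
  · refine ae_restrict_of_forall_mem measurableSet_Ioi fun y (hy : 0 < y) ↦ ?_
    rw [Real.norm_of_nonneg (oneSubExpNegDiv_nonneg hu.le hy.le)]
    exact oneSubExpNegDiv_le_max_mul_min hu hy.le

lemma ofReal_integral_div_eq_lintegral {u : ℝ} (hu : 0 < u) :
    ENNReal.ofReal ((∫ y in Ioi 0, (1 - exp (-(u * y))) ∂ν) / u)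
      = ∫⁻ y in Ioi 0, ENNReal.ofReal (oneSubExpNegDiv u y) ∂ν := by
  rw [← integral_div]
  exact ofReal_integral_eq_lintegral_ofReal (integrable_oneSubExpNegDiv hν hu) <|
    ae_restrict_of_forall_mem measurableSet_Ioi fun y hy ↦
      oneSubExpNegDiv_nonneg hu.le (le_of_lt hy)

lemma lintegral_ofReal_integral_div_eq (β : ℝ) :
    ∫⁻ u in Ioc 0 β, ENNReal.ofReal ((∫ y in Ioi 0, (1 - exp (-(u * y))) ∂ν) / u)
      = ∫⁻ y in Ioi 0, einLIntegral β y ∂ν := by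
  have := sigmaFinite_restrict_Ioi_of_measure_Ioi_lt_top fun _ ↦
    measure_Ioi_lt_top_of_lintegral_min hν
  rw [setLIntegral_congr_fun measurableSet_Ioc fun u hu ↦ ofReal_integral_div_eq_lintegral hν hu.1]
  exact lintegral_lintegral_swap measurable_oneSubExpNegDiv.ennreal_ofReal.aemeasurable

lemma setLIntegral_einLIntegral_Ioc_lt_top {β M : ℝ} (hβ : 0 ≤ β) (hM : 1 ≤ M) :
    ∫⁻ y in Ioc 0 M, einLIntegral β y ∂ν < ∞ := by
  refine setLIntegral_lt_top_of_le_const_mul (c := ENNReal.ofReal (β * M)) measurableSet_Ioc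
    ENNReal.ofReal_ne_top (fun y hy ↦ ?_) ((lintegral_mono_set Ioc_subset_Ioi_self).trans_lt hν)
  refine (einLIntegral_le_ofReal_mul hy.1.le).trans ?_
  rw [← ENNReal.ofReal_mul (by positivity)]
  refine ENNReal.ofReal_le_ofReal ?_
  rcases le_total y 1 with h | h
  · rw [min_eq_right h, mul_assoc]
    exact mul_le_mul_of_nonneg_left (le_mul_of_one_le_left hy.1.le hM) hβ
  · rw [min_eq_left h, mul_one]
    exact mul_le_mul_of_nonneg_left hy.2 hβ

end LevyMeasure

section Tail

variable {β y : ℝ}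

lemma log_le_two_mul_log_mul (hβ : 0 < β) (hy : β⁻¹ ^ 2 ≤ y) : log y ≤ 2 * log (β * y) := by
  have hy0 : 0 < y := lt_of_lt_of_le (by positivity) hy
  have h := log_le_log (by positivity) hy
  rw [log_pow, log_inv, Nat.cast_ofNat] at h
  rw [log_mul hβ.ne' hy0.ne']
  linarith

lemma one_le_mul_of_inv_sq_le (hβ : 0 < β) (hy1 : 1 ≤ y) (hy : β⁻¹ ^ 2 ≤ y) : 1 ≤ β * y := by
  rw [← log_nonneg_iff (by positivity)]
  linarith [log_nonneg hy1, log_le_two_mul_log_mul hβ hy]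

lemma ofReal_log_le_mul_einLIntegral (hβ : 0 < β) (hy1 : 1 ≤ y) (hy : β⁻¹ ^ 2 ≤ y) :
    ENNReal.ofReal (log y) ≤ ENNReal.ofReal (2 / (1 - exp (-1))) * einLIntegral β y := by
  have hc : 0 < 1 - exp (-1) := sub_pos.2 (exp_lt_one_iff.2 (by norm_num))
  refine le_trans ?_ (mul_le_mul_right
    (ofReal_mul_log_le_einLIntegral (by positivity) (one_le_mul_of_inv_sq_le hβ hy1 hy)) _)
  rw [← ENNReal.ofReal_mul (by positivity)]
  refine ENNReal.ofReal_le_ofReal ((log_le_two_mul_log_mul hβ hy).trans_eq ?_)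
  field_simp

lemma einLIntegral_le_ofReal_log_add (hy : 0 < y) (h : 1 ≤ β * y) :
    einLIntegral β y ≤ ENNReal.ofReal (log y) + ENNReal.ofReal (1 + |log β|) := by
  have hβ : β ≠ 0 := by rintro rfl; norm_num at h
  refine (einLIntegral_le_one_add_log hy h).trans ?_
  rw [add_comm]
  refine le_trans (ENNReal.ofReal_le_ofReal ?_) ENNReal.ofReal_add_le
  rw [log_mul hβ hy.ne']
  linarith [le_abs_self (log β)]

end Tail

/-- log-moment dichotomy. For every `β > 0`, `∫_0^β φ(u)/u du < ∞` if
and only if `∫_1^∞ log y ν(dy) < ∞`. -/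
theorem stmt_14
    (ν : Measure ℝ) (φ : ℝ → ℝ)
    (hν : ∫⁻ y in Set.Ioi (0 : ℝ), ENNReal.ofReal (min 1 y) ∂ν < ⊤)
    (hφ : ∀ β ≥ (0 : ℝ), φ β = ∫ y in Set.Ioi (0 : ℝ), (1 - Real.exp (-(β * y))) ∂ν)
    (β : ℝ) (hβ : 0 < β) :
    (∫⁻ u in Set.Ioc (0 : ℝ) β, ENNReal.ofReal (φ u / u)) < ⊤ ↔
      (∫⁻ y in Set.Ioi (1 : ℝ), ENNReal.ofReal (Real.log y) ∂ν) < ⊤ := by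
  set M := max 1 (β⁻¹ ^ 2)
  have hM : 1 ≤ M := le_max_left _ _
  have hyM : ∀ y ∈ Ioi M, 1 ≤ y ∧ β⁻¹ ^ 2 ≤ y := fun y hy ↦
    ⟨hM.trans (le_of_lt hy), (le_max_right _ _).trans (le_of_lt hy)⟩
  have hlog_head : ∫⁻ y in Ioc 1 M, ENNReal.ofReal (log y) ∂ν < ∞ :=
    setLIntegral_lt_top_of_le_nnreal
      ((measure_mono Ioc_subset_Ioi_self).trans_lt
        (measure_Ioi_lt_top_of_lintegral_min hν one_pos)).ne
      ⟨(log M).toNNReal, fun y hy ↦ ENNReal.ofReal_le_ofReal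
        (log_le_log (zero_lt_one.trans hy.1) hy.2)⟩
  rw [setLIntegral_congr_fun measurableSet_Ioc fun u hu ↦ by rw [hφ u hu.1.le],
    lintegral_ofReal_integral_div_eq hν,
    setLIntegral_Ioi_lt_top_iff_of_le (zero_le_one.trans hM)
      (setLIntegral_einLIntegral_Ioc_lt_top hν hβ.le hM),
    setLIntegral_Ioi_lt_top_iff_of_le hM hlog_head]
  constructor
  · exact setLIntegral_lt_top_of_le_const_mul measurableSet_Ioi ENNReal.ofReal_ne_top
      fun y hy ↦ ofReal_log_le_mul_einLIntegral hβ (hyM y hy).1 (hyM y hy).2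
  · exact setLIntegral_lt_top_of_le_add_const measurableSet_Ioi
      (measure_Ioi_lt_top_of_lintegral_min hν (zero_lt_one.trans_le hM)) ENNReal.ofReal_ne_top
      fun y hy ↦ einLIntegral_le_ofReal_log_add (zero_lt_one.trans_le (hyM y hy).1)
        (one_le_mul_of_inv_sq_le hβ (hyM y hy).1 (hyM y hy).2)
end
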